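/- arXiv:1401.4770 — 7 statements merged into one kernel-verified Lean document; each statement's English description precedes it below -/
import Mathlib

section
/- Let w be a row-stochastic matrix on a finite set V with w(i,i) > 0 for all i and with the directed graph {(i,j) : w(i,j) > 0} strongly connected. Then w has a unique stationary probability vector α (satisfying α = α w), and for every initial vector x ∈ ℝ^V and every j ∈ V, the DeGroot dynamics A_t = w^t x satisfies lim_{t→∞} (w^t x)_j = Σ_{i∈V} α_i x_i; in particular all coordinates converge to the same limit Σ_i α_i x_i. -/
/-!
Since every `w i i > 0` and the positivity digraph is strongly connected, some power `w ^ m` is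
entrywise positive, say with entries `≥ ε > 0`. Averaging with such weights shrinks the spread
`max x - min x` of a vector by the factor `1 - ε`, while `w` itself never increases it and never
decreases `min x`. Hence every coordinate of `w ^ t x` converges to one common value. Applied to
the basis vectors this says `w ^ t` converges to a matrix whose rows all equal one vector `α`;
passing to the limit in `w ^ (t + 1) = w ^ t * w`, `w ^ t *ᵥ 1 = 1` and `β ᵥ* w ^ t = β` shows
that `α` is a stationary probability vector and the only one.
-/

open Finset Filter Topology Matrix

section Spread

variable {V : Type*} [Fintype V]

noncomputable def spread (x : V → ℝ) : ℝ := (⨆ i, x i) - ⨅ i, x i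

lemma spread_nonneg [Nonempty V] (x : V → ℝ) : 0 ≤ spread x :=
  sub_nonneg.2 <| (ciInf_le (Finite.bddBelow_range x) (Classical.arbitrary V)).trans
    (le_ciSup (Finite.bddAbove_range x) _)

lemma apply_le_iInf_add_spread (x : V → ℝ) (j : V) : x j ≤ (⨅ i, x i) + spread x := by
  have := le_ciSup (Finite.bddAbove_range x) j
  rw [spread]
  linarith

end Spread

namespace Matrix

variable {V : Type*} [Fintype V]

lemma mul_apply_pos_of_pos {A B : Matrix V V ℝ} (hA : ∀ i j, 0 ≤ A i j)
    (hB : ∀ i j, 0 ≤ B i j) {i k j : V} (hik : 0 < A i k) (hkj : 0 < B k j) :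
    0 < (A * B) i j :=
  sum_pos' (fun l _ => mul_nonneg (hA i l) (hB l j)) ⟨k, mem_univ k, mul_pos hik hkj⟩

section Primitive

variable [DecidableEq V] {A : Matrix V V ℝ}

lemma exists_pow_apply_pos_of_reflTransGen (hA : ∀ i j, 0 ≤ A i j) {i j : V}
    (h : Relation.ReflTransGen (fun a b => 0 < A a b) i j) : ∃ k, 0 < (A ^ k) i j := by
  induction h with
  | refl => exact ⟨0, by simp⟩
  | tail _ hbc ih =>
    obtain ⟨k, hk⟩ := ih
    exact ⟨k + 1, pow_succ A k ▸ mul_apply_pos_of_pos (pow_apply_nonneg hA k) hA hk hbc⟩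

lemma pow_apply_pos_of_le (hA : ∀ i j, 0 ≤ A i j) (hdiag : ∀ i, 0 < A i i) {i j : V}
    {k l : ℕ} (hkl : k ≤ l) (hk : 0 < (A ^ k) i j) : 0 < (A ^ l) i j := by
  induction l, hkl using Nat.le_induction with
  | base => exact hk
  | succ l _ ih =>
    exact pow_succ A l ▸ mul_apply_pos_of_pos (pow_apply_nonneg hA l) hA ih (hdiag j)

theorem isPrimitive_of_connected_of_diag_pos (hA : ∀ i j, 0 ≤ A i j) (hdiag : ∀ i, 0 < A i i)
    (hconn : ∀ i j, Relation.ReflTransGen (fun a b => 0 < A a b) i j) : IsPrimitive A := by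
  have hev : ∀ i j, ∀ᶠ k in atTop, 0 < (A ^ k) i j := fun i j => by
    obtain ⟨k, hk⟩ := exists_pow_apply_pos_of_reflTransGen hA (hconn i j)
    exact eventually_atTop.2 ⟨k, fun l hl => pow_apply_pos_of_le hA hdiag hl hk⟩
  obtain ⟨k, hk, hpos⟩ := ((eventually_gt_atTop 0).and
    (eventually_all.2 fun i => eventually_all.2 (hev i))).exists
  exact ⟨hA, k, hk, hpos⟩

end Primitive

variable [DecidableEq V] {M : Matrix V V ℝ}

lemma mulVec_apply_sub_const (hM : M ∈ rowStochastic ℝ V) (x : V → ℝ) (c : ℝ) (j : V) :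
    (M *ᵥ x) j - c = ∑ k, M j k * (x k - c) := by
  simp only [mul_sub, sum_sub_distrib, ← sum_mul, sum_row_of_mem_rowStochastic hM, one_mul]
  rfl

lemma iInf_le_mulVec_apply (hM : M ∈ rowStochastic ℝ V) (x : V → ℝ) (j : V) :
    ⨅ i, x i ≤ (M *ᵥ x) j := by
  rw [← sub_nonneg, mulVec_apply_sub_const hM]
  exact sum_nonneg fun k _ => mul_nonneg (nonneg_of_mem_rowStochastic hM)
    (sub_nonneg.2 (ciInf_le (Finite.bddBelow_range x) k))

lemma mulVec_apply_le_iSup (hM : M ∈ rowStochastic ℝ V) (x : V → ℝ) (j : V) :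
    (M *ᵥ x) j ≤ ⨆ i, x i := by
  rw [← sub_nonpos, mulVec_apply_sub_const hM]
  exact sum_nonpos fun k _ => mul_nonpos_of_nonneg_of_nonpos (nonneg_of_mem_rowStochastic hM)
    (sub_nonpos.2 (le_ciSup (Finite.bddAbove_range x) k))

section Contraction

variable [Nonempty V]

lemma iInf_le_iInf_mulVec (hM : M ∈ rowStochastic ℝ V) (x : V → ℝ) :
    ⨅ i, x i ≤ ⨅ j, (M *ᵥ x) j :=
  le_ciInf (iInf_le_mulVec_apply hM x)

lemma spread_mulVec_le (hM : M ∈ rowStochastic ℝ V) {ε : ℝ} (hε : ∀ i j, ε ≤ M i j)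
    (x : V → ℝ) : spread (M *ᵥ x) ≤ (1 - ε) * spread x := by
  obtain ⟨k, hk⟩ := exists_eq_ciSup_of_finite (f := x)
  have hspread : spread x = x k - ⨅ i, x i := by rw [spread, hk]
  -- each row puts weight `≥ ε` on a coordinate where `x` is maximal
  have hlow : (⨅ i, x i) + ε * spread x ≤ ⨅ j, (M *ᵥ x) j := by
    refine le_ciInf fun j => ?_
    have hterm : ∀ l, 0 ≤ M j l * (x l - ⨅ i, x i) := fun l =>
      mul_nonneg (nonneg_of_mem_rowStochastic hM)
        (sub_nonneg.2 (ciInf_le (Finite.bddBelow_range x) l))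
    have hgain : ε * spread x ≤ (M *ᵥ x) j - ⨅ i, x i :=
      calc ε * spread x ≤ M j k * (x k - ⨅ i, x i) := by
            rw [← hspread]
            exact mul_le_mul_of_nonneg_right (hε j k) (spread_nonneg x)
        _ ≤ ∑ l, M j l * (x l - ⨅ i, x i) := single_le_sum (fun l _ => hterm l) (mem_univ k)
        _ = (M *ᵥ x) j - ⨅ i, x i := (mulVec_apply_sub_const hM x _ j).symm
    linarith
  have hup : ⨆ j, (M *ᵥ x) j ≤ ⨆ i, x i := ciSup_le (mulVec_apply_le_iSup hM x)
  calc spread (M *ᵥ x) ≤ (⨆ i, x i) - ((⨅ i, x i) + ε * spread x) := sub_le_sub hup hlow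
    _ = (1 - ε) * spread x := by rw [spread]; ring

lemma spread_pow_mulVec_le (hM : M ∈ rowStochastic ℝ V) {ε : ℝ} (hε : ∀ i j, ε ≤ M i j)
    (x : V → ℝ) (k : ℕ) : spread (M ^ k *ᵥ x) ≤ (1 - ε) ^ k * spread x := by
  have hc : 0 ≤ 1 - ε := by
    have := (hε (Classical.arbitrary V) (Classical.arbitrary V)).trans
      (le_one_of_mem_rowStochastic hM)
    linarith
  induction k with
  | zero => simp
  | succ k ih =>
    calc spread (M ^ (k + 1) *ᵥ x) = spread (M *ᵥ (M ^ k *ᵥ x)) := by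
          rw [pow_succ', mulVec_mulVec]
      _ ≤ (1 - ε) * spread (M ^ k *ᵥ x) := spread_mulVec_le hM hε _
      _ ≤ (1 - ε) * ((1 - ε) ^ k * spread x) := mul_le_mul_of_nonneg_left ih hc
      _ = (1 - ε) ^ (k + 1) * spread x := by ring

lemma antitone_spread_pow_mulVec (hM : M ∈ rowStochastic ℝ V) (x : V → ℝ) :
    Antitone fun t => spread (M ^ t *ᵥ x) :=
  antitone_nat_of_succ_le fun t => by
    simpa [pow_succ', ← mulVec_mulVec] using
      spread_mulVec_le hM (fun i j => nonneg_of_mem_rowStochastic hM) (M ^ t *ᵥ x)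

theorem IsPrimitive.tendsto_spread_pow_mulVec (hprim : IsPrimitive M)
    (hM : M ∈ rowStochastic ℝ V) (x : V → ℝ) :
    Tendsto (fun t => spread (M ^ t *ᵥ x)) atTop (𝓝 0) := by
  obtain ⟨m, hm, hpos⟩ := hprim.exists_pos_pow
  obtain ⟨p, hp⟩ := Finite.exists_min fun p : V × V => (M ^ m) p.1 p.2
  set ε := (M ^ m) p.1 p.2
  have hε : ∀ i j, ε ≤ (M ^ m) i j := fun i j => hp (i, j)
  have hε_one : ε ≤ 1 := le_one_of_mem_rowStochastic (pow_mem hM m)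
  have hdecay : ∀ t, spread (M ^ t *ᵥ x) ≤ (1 - ε) ^ (t / m) * spread x := fun t =>
    calc spread (M ^ t *ᵥ x) ≤ spread (M ^ (m * (t / m)) *ᵥ x) :=
          antitone_spread_pow_mulVec hM x (Nat.mul_div_le t m)
      _ = spread ((M ^ m) ^ (t / m) *ᵥ x) := by rw [pow_mul]
      _ ≤ (1 - ε) ^ (t / m) * spread x := spread_pow_mulVec_le (pow_mem hM m) hε x _
  have hgeom : Tendsto (fun t => (1 - ε) ^ (t / m) * spread x) atTop (𝓝 0) := by
    have hc : Tendsto (fun k : ℕ => (1 - ε) ^ k) atTop (𝓝 0) :=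
      tendsto_pow_atTop_nhds_zero_of_lt_one (by linarith) (by linarith [hpos p.1 p.2])
    simpa using (hc.comp (Nat.tendsto_div_const_atTop hm.ne')).mul_const (spread x)
  exact squeeze_zero (fun t => spread_nonneg _) hdecay hgeom

theorem exists_tendsto_pow_mulVec_apply_of_tendsto_spread (hM : M ∈ rowStochastic ℝ V)
    {x : V → ℝ} (hspread : Tendsto (fun t => spread (M ^ t *ᵥ x)) atTop (𝓝 0)) :
    ∃ L, ∀ j, Tendsto (fun t => (M ^ t *ᵥ x) j) atTop (𝓝 L) := by
  set low := fun t : ℕ => ⨅ i, (M ^ t *ᵥ x) i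
  have hmono : Monotone low := monotone_nat_of_le_succ fun t => by
    simpa only [low, pow_succ', ← mulVec_mulVec] using iInf_le_iInf_mulVec hM (M ^ t *ᵥ x)
  have hbdd : BddAbove (Set.range low) := ⟨⨆ i, x i, by
    rintro _ ⟨t, rfl⟩
    exact (ciInf_le (Finite.bddBelow_range _) (Classical.arbitrary V)).trans
      (mulVec_apply_le_iSup (pow_mem hM t) x _)⟩
  have hlow := tendsto_atTop_ciSup hmono hbdd
  refine ⟨⨆ t, low t, fun j => ?_⟩
  exact tendsto_of_tendsto_of_tendsto_of_le_of_le hlow (by simpa using hlow.add hspread)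
    (fun t => ciInf_le (Finite.bddBelow_range _) j) (fun t => apply_le_iInf_add_spread _ j)

theorem IsPrimitive.exists_tendsto_pow (hprim : IsPrimitive M) (hM : M ∈ rowStochastic ℝ V) :
    ∃ α : V → ℝ, Tendsto (fun t => M ^ t) atTop (𝓝 (of fun _ i => α i)) := by
  choose α hα using fun i => exists_tendsto_pow_mulVec_apply_of_tendsto_spread hM
    (hprim.tendsto_spread_pow_mulVec hM (Pi.single i 1))
  refine ⟨α, tendsto_pi_nhds.2 fun j => tendsto_pi_nhds.2 fun i => ?_⟩
  simpa [mulVec_single_one] using hα i j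

end Contraction

def IsStationaryDistribution (M : Matrix V V ℝ) (α : V → ℝ) : Prop :=
  (∀ i, 0 ≤ α i) ∧ (∑ i, α i = 1) ∧ (∀ j, ∑ i, α i * M i j = α j)

section RankOneLimit

variable {α : V → ℝ}

lemma tendsto_pow_mulVec_apply_of_tendsto_pow
    (hlim : Tendsto (fun t => M ^ t) atTop (𝓝 (of fun _ i => α i))) (x : V → ℝ) (j : V) :
    Tendsto (fun t => (M ^ t *ᵥ x) j) atTop (𝓝 (∑ i, α i * x i)) :=
  tendsto_pi_nhds.1 (((continuous_id.matrix_mulVec continuous_const).tendsto _).comp hlim) j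

lemma IsStationaryDistribution.eq_of_tendsto_pow {β : V → ℝ} (hβ : IsStationaryDistribution M β)
    (hlim : Tendsto (fun t => M ^ t) atTop (𝓝 (of fun _ i => α i))) : β = α := by
  have hfix : ∀ t, β ᵥ* M ^ t = β := fun t => by
    induction t with
    | zero => simp
    | succ t ih => rw [pow_succ, ← vecMul_vecMul, ih]; exact funext hβ.2.2
  have hβα : β ᵥ* (of fun _ i => α i) = β :=
    tendsto_nhds_unique (((continuous_const.matrix_vecMul continuous_id).tendsto _).comp hlim)
      (by simp only [Function.comp_def, id, hfix, tendsto_const_nhds])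
  rw [← hβα]
  ext j
  simp [vecMul, dotProduct, ← sum_mul, hβ.2.1]

theorem isStationaryDistribution_of_tendsto_pow [Nonempty V] (hM : M ∈ rowStochastic ℝ V)
    (hlim : Tendsto (fun t => M ^ t) atTop (𝓝 (of fun _ i => α i))) :
    IsStationaryDistribution M α := by
  let j₀ := Classical.arbitrary V
  have hrow : ∀ t, Tendsto (fun s => (M ^ s) j₀ t) atTop (𝓝 (α t)) := fun t =>
    tendsto_pi_nhds.1 (tendsto_pi_nhds.1 hlim j₀) t
  refine ⟨fun i => ge_of_tendsto' (hrow i) fun s => pow_apply_nonneg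
      (fun _ _ => nonneg_of_mem_rowStochastic hM) s j₀ i, ?_, fun j => ?_⟩
  · have hone := tendsto_pow_mulVec_apply_of_tendsto_pow hlim 1 j₀
    simp only [one_vecMul_of_mem_rowStochastic (pow_mem hM _), Pi.one_apply, mul_one] at hone
    exact tendsto_nhds_unique hone tendsto_const_nhds
  · have hshift : Tendsto (fun s => (M ^ s * M) j₀ j) atTop (𝓝 (α j)) := by
      simpa only [← pow_succ] using (tendsto_add_atTop_iff_nat 1).2 (hrow j)
    exact tendsto_nhds_unique ((tendsto_pow_mulVec_apply_of_tendsto_pow hlim _ j₀).congr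
      fun s => rfl) hshift

end RankOneLimit

end Matrix

/-- **DeGroot model: convergence and agreement.**
Let `w` be a row-stochastic matrix on a finite set `V` with `w i i > 0` for all `i`, whose
support digraph is strongly connected.  Then `w` has a unique stationary probability vector `α`,
and for every initial vector `x` and every coordinate `j`, the DeGroot dynamics `A_t = w^t x`
satisfies `(w^t x) j → ∑ i, α i * x i`. -/
theorem degroot_convergence (V : Type) [Fintype V] [DecidableEq V] [Nonempty V]
    (w : Matrix V V ℝ)
    (hnonneg : ∀ i j, 0 ≤ w i j)
    (hrow : ∀ i, ∑ j, w i j = 1)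
    (hdiag : ∀ i, 0 < w i i)
    (hconn : ∀ i j : V, Relation.ReflTransGen (fun a b => 0 < w a b) i j) :
    ∃ α : V → ℝ,
      ((∀ i, 0 ≤ α i) ∧ (∑ i, α i = 1) ∧ (∀ j, ∑ i, α i * w i j = α j)) ∧
      (∀ β : V → ℝ,
        ((∀ i, 0 ≤ β i) ∧ (∑ i, β i = 1) ∧ (∀ j, ∑ i, β i * w i j = β j)) → β = α) ∧
      (∀ x : V → ℝ, ∀ j : V,
        Filter.Tendsto (fun t : ℕ => (w ^ t).mulVec x j) Filter.atTop
          (nhds (∑ i, α i * x i))) := by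
  have hw : w ∈ rowStochastic ℝ V := mem_rowStochastic_iff_sum.2 ⟨hnonneg, hrow⟩
  have hprim : IsPrimitive w := isPrimitive_of_connected_of_diag_pos hnonneg hdiag hconn
  obtain ⟨α, hlim⟩ := hprim.exists_tendsto_pow hw
  exact ⟨α, isStationaryDistribution_of_tendsto_pow hw hlim,
    fun β hβ => IsStationaryDistribution.eq_of_tendsto_pow hβ hlim,
    tendsto_pow_mulVec_apply_of_tendsto_pow hlim⟩
end

section
/- In the voter model on a finite set V with row-stochastic weights w satisfying w(i,i) > 0 for all i and strong connectivity of {(i,j) : w(i,j) > 0}, almost surely there exists a time after which all agents hold the same constant action: the Markov chain on {0,1}^V is almost surely absorbed in the all-0 or the all-1 configuration, so all agents converge to a common limit action A_∞. -/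
/-!
Fix an agent `v` and, for every other agent `i`, a neighbour `f i` with `w i (f i) > 0` one step
closer to `v` along the support of `w` (and `f v = v`, as `w v v > 0`); then `f^[L]` is constant
equal to `v` for large `L`. On each block of `L` consecutive steps, the event that every agent `i`
copies `f i` at every step has probability `(∏ i, w i (f i)) ^ L > 0`, and these events are
independent over disjoint blocks, so by the second Borel–Cantelli lemma one of them occurs almost
surely. At the end of that block every agent holds the action `v` had at its start, and consensus
is absorbing.
-/

open Function MeasureTheory ProbabilityTheory

theorem Nat.pairwise_disjoint_Ico_mul_add (L a : ℕ) :
    Pairwise (Disjoint on fun k => Finset.Ico (L * k + a) (L * k + L + a)) := by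
  refine (pairwise_disjoint_on _).2 fun k m hkm => Finset.disjoint_left.2 fun t ht ht' => ?_
  have := Nat.mul_le_mul_left L (Nat.succ_le_of_lt hkm)
  simp only [Finset.mem_Ico] at ht ht'
  linarith

namespace Relation

variable {V : Type*} (r : V → V → Prop) (v : V)

def ReachesIn : ℕ → V → Prop
  | 0, i => i = v
  | n + 1, i => ∃ j, r i j ∧ ReachesIn n j

variable {r v}

theorem ReflTransGen.exists_reachesIn {i : V} (h : ReflTransGen r i v) :
    ∃ n, ReachesIn r v n i := by
  induction h using ReflTransGen.head_induction_on with
  | refl => exact ⟨0, rfl⟩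
  | head hij _ ih =>
    obtain ⟨n, hn⟩ := ih
    exact ⟨n + 1, _, hij, hn⟩

theorem exists_iterate_eq_of_forall_reflTransGen [Finite V] (hr : ∀ i, r i i)
    (h : ∀ i, ReflTransGen r i v) :
    ∃ (f : V → V) (L : ℕ), (∀ i, r i (f i)) ∧ ∀ i, f^[L] i = v := by
  classical
  have hex i : ∃ n, ReachesIn r v n i := (h i).exists_reachesIn
  obtain ⟨d, hd, hd_min⟩ : ∃ d : V → ℕ, (∀ i, ReachesIn r v (d i) i) ∧
      ∀ i n, ReachesIn r v n i → d i ≤ n :=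
    ⟨fun i => Nat.find (hex i), fun i => Nat.find_spec (hex i),
      fun i _ => Nat.find_min' (hex i)⟩
  -- `d` is the distance to `v`; at `v` the truncated `d v - 1 = 0` is met by `j = v`.
  have hstep i : ∃ j, r i j ∧ ReachesIn r v (d i - 1) j := by
    have hi := hd i
    rcases hdi : d i with _ | n <;> rw [hdi] at hi
    · exact ⟨i, hr i, hi⟩
    · exact hi
  choose f hrf hf using hstep
  have hcollapse : ∀ n i, d i ≤ n → f^[n] i = v := by
    intro n
    induction n with
    | zero => exact fun i hi => by simpa [Nat.le_zero.1 hi, ReachesIn] using hd i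
    | succ n ih => exact fun i hi => ih (f i) ((hd_min _ _ (hf i)).trans (by omega))
  obtain ⟨L, hL⟩ := (Set.finite_range d).bddAbove
  exact ⟨f, L, hrf, fun i => hcollapse L i (hL ⟨i, rfl⟩)⟩

end Relation

namespace ProbabilityTheory

variable {Ω ι β : Type*} [MeasurableSpace Ω] {P : Measure Ω} [MeasurableSpace β]
  {X : ι → Ω → β} {s : ι → Set β}

theorem iIndepFun.iIndepSet_biInter_preimage {κ : Type*} (hX : iIndepFun X P)
    (hXm : ∀ i, Measurable (X i)) (hs : ∀ i, MeasurableSet (s i)) {S : κ → Finset ι}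
    (hS : Pairwise (Disjoint on S)) : iIndepSet (fun k => ⋂ i ∈ S k, X i ⁻¹' s i) P := by
  classical
  rw [iIndepSet_iff_meas_biInter fun k => Finset.measurableSet_biInter (S k)
    fun i _ => hXm i (hs i)]
  intro K
  rw [← Finset.set_biInter_biUnion, hX.measure_inter_preimage_eq_mul _ fun i _ => hs i,
    Finset.prod_biUnion (hS.set_pairwise _)]
  exact Finset.prod_congr rfl fun k _ =>
    (hX.measure_inter_preimage_eq_mul _ fun i _ => hs i).symm

theorem iIndepFun.ae_exists_forall_mem [IsProbabilityMeasure P] (hX : iIndepFun X P)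
    (hXm : ∀ i, Measurable (X i)) (hs : ∀ i, MeasurableSet (s i)) {S : ℕ → Finset ι}
    (hS : Pairwise (Disjoint on S)) {q : ENNReal} (hq : q ≠ 0)
    (hqS : ∀ k, q ≤ ∏ i ∈ S k, P (X i ⁻¹' s i)) :
    ∀ᵐ ω ∂P, ∃ k, ∀ i ∈ S k, X i ω ∈ s i := by
  set E : ℕ → Set Ω := fun k => ⋂ i ∈ S k, X i ⁻¹' s i
  have hEm k : MeasurableSet (E k) := Finset.measurableSet_biInter (S k) fun i _ => hXm i (hs i)
  have hsum : ∑' k, P (E k) = ⊤ := by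
    refine top_le_iff.1 ((ENNReal.tsum_const_eq_top_of_ne_zero hq).symm.le.trans
      (ENNReal.tsum_le_tsum fun k => ?_))
    rw [hX.measure_inter_preimage_eq_mul _ fun i _ => hs i]
    exact hqS k
  have hlimsup := measure_limsup_eq_one hEm (hX.iIndepSet_biInter_preimage hXm hs hS) hsum
  rw [← prob_compl_eq_zero_iff (MeasurableSet.measurableSet_limsup hEm)] at hlimsup
  filter_upwards [measure_eq_zero_iff_ae_notMem.1 hlimsup] with ω hω
  obtain ⟨k, hk⟩ := (Filter.mem_limsup_iff_frequently_mem.1 (not_not.1 hω)).exists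
  exact ⟨k, fun i hi => Set.mem_iInter₂.1 hk i hi⟩

end ProbabilityTheory

namespace VoterModel

variable {V α : Type*} (a : ℕ → V → α) (c : ℕ → V → V)

theorem apply_add_eq_apply_iterate (ha : ∀ t i, a (t + 1) i = a t (c (t + 1) i))
    {f : V → V} {t n : ℕ} (hc : ∀ s < n, ∀ i, c (t + s + 1) i = f i) (i : V) :
    a (t + n) i = a t (f^[n] i) := by
  induction n generalizing i with
  | zero => rfl
  | succ n ih =>
    rw [← add_assoc, ha, hc n n.lt_succ_self, ih (fun s hs => hc s (hs.trans n.lt_succ_self)),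
      iterate_succ_apply]

theorem forall_apply_eq_of_le (ha : ∀ t i, a (t + 1) i = a t (c (t + 1) i)) {T : ℕ} {b : α}
    (hT : ∀ i, a T i = b) : ∀ t, T ≤ t → ∀ i, a t i = b := by
  intro t ht
  induction t, ht using Nat.le_induction with
  | base => exact hT
  | succ t _ ih => exact fun i => (ha t i).trans (ih _)

end VoterModel

theorem voter_model_absorption_general
    (V : Type) [Fintype V] [Nonempty V] [MeasurableSpace V] [MeasurableSingletonClass V]
    (w : V → V → ℝ)
    (hdiag : ∀ i, 0 < w i i)
    (hconn : ∀ i j : V, Relation.ReflTransGen (fun a b => 0 < w a b) i j)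
    {Ω : Type} [MeasurableSpace Ω] (P : Measure Ω) [IsProbabilityMeasure P]
    -- the independent random choices of neighbors, `P(J t i = j) = w i j`
    (J : ℕ → V → Ω → V)
    (hJmeas : ∀ t i, Measurable (J t i))
    (hJindep : iIndepFun
      (fun p : ℕ × V => J p.1 p.2) P)
    (hJlaw : ∀ t i j, P {ω | J t i ω = j} = ENNReal.ofReal (w i j))
    -- the voter model dynamics, from an arbitrary measurable initial configuration
    (A : ℕ → V → Ω → Bool)
    (hAstep : ∀ t i ω, A (t + 1) i ω = A t (J (t + 1) i ω) ω) :
    ∀ᵐ ω ∂P, ∃ b : Bool, ∃ T : ℕ, ∀ t : ℕ, T ≤ t → ∀ i : V, A t i ω = b := by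
  obtain ⟨v⟩ := ‹Nonempty V›
  obtain ⟨f, L, hwf, hfL⟩ :=
    Relation.exists_iterate_eq_of_forall_reflTransGen hdiag fun i => hconn i v
  let block k := Finset.Ico (L * k + 1) (L * k + L + 1) ×ˢ (Finset.univ : Finset V)
  have hblock_disj : Pairwise (Disjoint on block) := fun k m hkm =>
    Finset.disjoint_product.2 (.inl (Nat.pairwise_disjoint_Ico_mul_add L 1 hkm))
  have hblock_prob k : (∏ i, ENNReal.ofReal (w i (f i))) ^ L ≤
      ∏ p ∈ block k, P (J p.1 p.2 ⁻¹' {f p.2}) := by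
    simp only [block, Finset.prod_product, Set.preimage, Set.mem_singleton_iff, hJlaw,
      Finset.prod_const, Nat.card_Ico]
    exact le_of_eq (by congr 1; omega)
  have hq : (∏ i, ENNReal.ofReal (w i (f i))) ^ L ≠ 0 :=
    pow_ne_zero _ (Finset.prod_ne_zero_iff.2 fun i _ => ENNReal.ofReal_pos.2 (hwf i) |>.ne')
  filter_upwards [hJindep.ae_exists_forall_mem (fun p => hJmeas p.1 p.2)
    (fun _ => measurableSet_singleton _) hblock_disj hq hblock_prob] with ω ⟨k, hk⟩
  have hcopy : ∀ s < L, ∀ i, J (L * k + s + 1) i ω = f i := fun s hs i =>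
    hk (L * k + s + 1, i) (by
      simp only [block, Finset.mem_product, Finset.mem_Ico, Finset.mem_univ, and_true]; omega)
  have hconsensus i : A (L * k + L) i ω = A (L * k) v ω := by
    rw [VoterModel.apply_add_eq_apply_iterate (A · · ω) (J · · ω) (hAstep · · ω) hcopy,
      hfL]
  exact ⟨_, _,
    VoterModel.forall_apply_eq_of_le (A · · ω) (J · · ω) (hAstep · · ω) hconsensus⟩

/-- **Absorption of the voter model.**
On a finite set `V` with row-stochastic weights `w` satisfying `w i i > 0` and strong
connectivity of the support `{(i,j) : w i j > 0}`, run the voter model: at each step `t ≥ 1`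
every agent `i` independently picks a random agent `J t i` with `P(J t i = j) = w i j` and
copies its previous action, `A t i = A (t-1) (J t i)`.  Then almost surely the chain is
absorbed in the all-`0` or all-`1` configuration: there is a common constant limit action. -/
theorem voter_model_absorption
    (V : Type) [Fintype V] [Nonempty V] [MeasurableSpace V] [MeasurableSingletonClass V]
    (w : V → V → ℝ)
    (hnonneg : ∀ i j, 0 ≤ w i j)
    (hrow : ∀ i, ∑ j, w i j = 1)
    (hdiag : ∀ i, 0 < w i i)
    (hconn : ∀ i j : V, Relation.ReflTransGen (fun a b => 0 < w a b) i j)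
    {Ω : Type} [MeasurableSpace Ω] (P : Measure Ω) [IsProbabilityMeasure P]
    -- the independent random choices of neighbors, `P(J t i = j) = w i j`
    (J : ℕ → V → Ω → V)
    (hJmeas : ∀ t i, Measurable (J t i))
    (hJindep : iIndepFun
      (fun p : ℕ × V => J p.1 p.2) P)
    (hJlaw : ∀ t i j, P {ω | J t i ω = j} = ENNReal.ofReal (w i j))
    -- the voter model dynamics, from an arbitrary measurable initial configuration
    (A : ℕ → V → Ω → Bool)
    (hA0meas : ∀ i, Measurable (A 0 i))
    (hAstep : ∀ t i ω, A (t + 1) i ω = A t (J (t + 1) i ω) ω) :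
    ∀ᵐ ω ∂P, ∃ b : Bool, ∃ T : ℕ, ∀ t : ℕ, T ≤ t → ∀ i : V, A t i ω = b :=
  voter_model_absorption_general V w hdiag hconn P J hJmeas hJindep hJlaw A hAstep
end

section
/- Consider the voter model on a finite set V with row-stochastic weights w, w(i,i) > 0 for all i, strongly connected support, and stationary distribution α (the unique probability vector with α = α w). Let S be uniform on {0,1} and let the initial actions be private signals X_i that are i.i.d. conditioned on S with P(X_i = S) = 1/2 + δ for some 0 < δ < 1/2. Let A_∞ be the common limit action (which exists almost surely). Then: (1) conditioned on the private signals, P(A_∞ = 1 | X) = Σ_{i∈V} α_i X_i; (2) P(A_∞ = S | X) = Σ_{i∈V} α_i 1{X_i = S}; and (3) P(A_∞ = S) = 1/2 + δ. -/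
/-!
Duality: the opinion of agent `i` at time `t` is the initial signal of its ancestor
`ancestor J t i`, found by following the neighbour choices backwards in time. Since
`ancestor J (t + 1) i = ancestor J t (J (t + 1) i)` and the choice `J (t + 1) i` is independent
of the signals and of the earlier choices (which determine `ancestor J t`), the ancestor moves
like the Markov chain `w`, so for the stationary `α` the quantity
`∑ i, α i * E[F (Z, ancestor J t i)]` does not depend on `t`, where `Z = (S, X)`. Dominated
convergence as `t → ∞` then gives `E[G (Z, A∞)] = ∑ j, α j * E[G (Z, X j)]` for every `G`;
localised to events of `σ(Z)` this identifies the conditional expectations, and with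
`P(X j = S) = 1/2 + δ` it gives (3).
-/

open MeasureTheory ProbabilityTheory MeasurableSpace Set

lemma indep_sup_of_indep_sup_of_indep {Ω : Type*} {m₁ m₂ m₃ mΩ : MeasurableSpace Ω}
    {μ : Measure Ω} [IsZeroOrProbabilityMeasure μ] (h₁ : m₁ ≤ mΩ) (h₂ : m₂ ≤ mΩ) (h₃ : m₃ ≤ mΩ)
    (h₁₂₃ : Indep m₁ (m₂ ⊔ m₃) μ) (h₂₃ : Indep m₂ m₃ μ) : Indep m₂ (m₁ ⊔ m₃) μ := by
  set p := image2 (· ∩ ·) {s | MeasurableSet[m₁] s} {s | MeasurableSet[m₃] s}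
  have hp : IsPiSystem p := by
    rintro _ ⟨a, ha, b, hb, rfl⟩ _ ⟨c, hc, d, hd, rfl⟩ -
    exact ⟨a ∩ c, ha.inter hc, b ∩ d, hb.inter hd, inter_inter_inter_comm a c b d⟩
  have hgen : m₁ ⊔ m₃ = generateFrom p := by
    refine le_antisymm (sup_le (fun s hs => ?_) (fun s hs => ?_)) (generateFrom_le ?_)
    · exact measurableSet_generateFrom ⟨s, hs, univ, .univ, inter_univ s⟩
    · exact measurableSet_generateFrom ⟨univ, .univ, s, hs, univ_inter s⟩
    · rintro _ ⟨a, ha, b, hb, rfl⟩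
      exact (le_sup_left : m₁ ≤ m₁ ⊔ m₃) a ha |>.inter ((le_sup_right : m₃ ≤ m₁ ⊔ m₃) b hb)
  refine IndepSets.indep h₂ (sup_le h₁ h₃) (@isPiSystem_measurableSet Ω m₂) hp
    (@generateFrom_measurableSet Ω m₂).symm hgen ?_
  rw [IndepSets_iff]
  rintro t _ ht ⟨a, ha, b, hb, rfl⟩
  have htb : MeasurableSet[m₂ ⊔ m₃] (t ∩ b) :=
    (le_sup_left : m₂ ≤ m₂ ⊔ m₃) t ht |>.inter ((le_sup_right : m₃ ≤ m₂ ⊔ m₃) b hb)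
  calc μ (t ∩ (a ∩ b)) = μ (a ∩ (t ∩ b)) := by rw [inter_left_comm]
    _ = μ a * (μ t * μ b) := by
      rw [(Indep_iff _ _ _).1 h₁₂₃ a _ ha htb, (Indep_iff _ _ _).1 h₂₃ t b ht hb]
    _ = μ t * (μ a * μ b) := by ring
    _ = μ t * μ (a ∩ b) := by
      rw [(Indep_iff _ _ _).1 h₁₂₃ a b ha ((le_sup_right : m₃ ≤ m₂ ⊔ m₃) b hb)]

lemma integral_comp_eq_sum {Ω E : Type*} [MeasurableSpace Ω] [Fintype E] [MeasurableSpace E]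
    [MeasurableSingletonClass E] {μ : Measure Ω} [IsFiniteMeasure μ] {W : Ω → E}
    (hW : Measurable W) (h : E → ℝ) :
    ∫ ω, h (W ω) ∂μ = ∑ e, μ.real (W ⁻¹' {e}) * h e := by
  rw [← integral_map hW.aemeasurable (.of_discrete), integral_fintype .of_finite]
  simp [map_measureReal_apply hW (measurableSet_singleton _)]

lemma integrable_comp_of_finite {Ω E : Type*} [MeasurableSpace Ω] [Finite E] [MeasurableSpace E]
    [MeasurableSingletonClass E] {μ : Measure Ω} [IsFiniteMeasure μ] {W : Ω → E}
    (hW : Measurable W) (h : E → ℝ) : Integrable (fun ω => h (W ω)) μ :=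
  Integrable.of_finite.comp_measurable hW

lemma condExp_comap_eq_of_forall_setIntegral {Ω δ : Type*} [MeasurableSpace Ω]
    [MeasurableSpace δ] [Finite δ] [MeasurableSingletonClass δ] {μ : Measure Ω}
    [IsFiniteMeasure μ] {W : Ω → δ} (hW : Measurable W) {f : Ω → ℝ} (hf : Integrable f μ)
    (h : δ → ℝ)
    (hset : ∀ T, MeasurableSet T → ∫ ω in W ⁻¹' T, h (W ω) ∂μ = ∫ ω in W ⁻¹' T, f ω ∂μ) :
    μ[f | MeasurableSpace.comap W ‹_›] =ᵐ[μ] fun ω => h (W ω) :=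
  (ae_eq_condExp_of_forall_setIntegral_eq hW.comap_le hf
    (fun _ _ _ => (integrable_comp_of_finite hW h).integrableOn)
    (by rintro _ ⟨T, hT, rfl⟩ -; exact hset T hT)
    ((Measurable.of_discrete.comp (comap_measurable W)).aestronglyMeasurable)).symm

lemma sum_prod_mul_apply {ι β : Type*} [Fintype ι] [DecidableEq ι] [Fintype β]
    (q : ι → β → ℝ) (hq : ∀ i, ∑ b, q i b = 1) (h : β → ℝ) (j : ι) :
    ∑ f : ι → β, (∏ i, q i (f i)) * h (f j) = ∑ b, q j b * h b := by
  set q' := Function.update q j fun b => q j b * h b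
  have hprod : ∀ f : ι → β, (∏ i, q i (f i)) * h (f j) = ∏ i, q' i (f i) := fun f => by
    have hrest : ∏ i ∈ Finset.univ.erase j, q' i (f i) = ∏ i ∈ Finset.univ.erase j, q i (f i) :=
      Finset.prod_congr rfl fun i hi => by simp [q', Finset.ne_of_mem_erase hi]
    rw [← Finset.mul_prod_erase _ _ (Finset.mem_univ j),
      ← Finset.mul_prod_erase _ (fun i => q' i (f i)) (Finset.mem_univ j), hrest]
    simp only [q', Function.update_self]
    ring
  simp_rw [hprod, ← Fintype.prod_sum]
  rw [Finset.prod_eq_single j (fun i _ hij => by simp [q', hij, hq]) (by simp)]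
  simp [q']

lemma integral_signal_eq_state {Ω V : Type*} [MeasurableSpace Ω] [Fintype V] {μ : Measure Ω}
    [IsFiniteMeasure μ] {S : Ω → Bool} {X : V → Ω → Bool} (hS : Measurable S)
    (hX : ∀ i, Measurable (X i)) {δ : ℝ} (hδ : |δ| ≤ 1 / 2)
    (hlaw : ∀ (s : Bool) (f : V → Bool), μ {ω | S ω = s ∧ ∀ i, X i ω = f i}
      = ENNReal.ofReal (1 / 2 * ∏ i, (if f i = s then 1 / 2 + δ else 1 / 2 - δ))) (j : V) :
    ∫ ω, (if X j ω = S ω then (1 : ℝ) else 0) ∂μ = 1 / 2 + δ := by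
  classical
  obtain ⟨hδl, hδr⟩ := abs_le.1 hδ
  set q : Bool → V → Bool → ℝ := fun s _ b => if b = s then 1 / 2 + δ else 1 / 2 - δ
  have hq : ∀ s i, ∑ b, q s i b = 1 := fun s i => by cases s <;> simp [q] <;> ring
  have hatom : ∀ s f, μ.real ((fun ω => (S ω, fun i => X i ω)) ⁻¹' {(s, f)})
      = 1 / 2 * ∏ i, q s i (f i) := fun s f => by
    have hnonneg : 0 ≤ 1 / 2 * ∏ i, q s i (f i) :=
      mul_nonneg (by norm_num) (Finset.prod_nonneg fun i _ => by
        simp only [q]; split <;> linarith)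
    rw [measureReal_def, ← ENNReal.toReal_ofReal hnonneg, ← hlaw]
    congr 2
    ext ω
    simp [Prod.ext_iff, funext_iff]
  rw [integral_comp_eq_sum (hS.prodMk (measurable_pi_lambda _ hX))
    fun e : Bool × (V → Bool) => if e.2 j = e.1 then (1 : ℝ) else 0, Fintype.sum_prod_type]
  simp_rw [hatom, mul_assoc, ← Finset.mul_sum]
  rw [Fintype.sum_bool, sum_prod_mul_apply (q true) (hq true) (fun b => if b = true then 1 else 0),
    sum_prod_mul_apply (q false) (hq false) (fun b => if b = false then 1 else 0)]
  simp [q]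
  ring

section Voter

variable {V Ω : Type*}

def ancestor (J : ℕ → V → Ω → V) : ℕ → V → Ω → V
  | 0, i, _ => i
  | t + 1, i, ω => ancestor J t (J (t + 1) i ω) ω

lemma eq_initial_ancestor {β : Type*} {J : ℕ → V → Ω → V} {A : ℕ → V → Ω → β}
    (hAstep : ∀ t i ω, A (t + 1) i ω = A t (J (t + 1) i ω) ω) (t : ℕ) (i : V) (ω : Ω) :
    A t i ω = A 0 (ancestor J t i ω) ω := by
  induction t generalizing i with
  | zero => rfl
  | succ t ih => rw [hAstep, ih]; rfl

variable [MeasurableSpace V]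

abbrev pastChoices (J : ℕ → V → Ω → V) (t : ℕ) : MeasurableSpace Ω :=
  ⨆ p ∈ {p : ℕ × V | p.1 ≤ t}, MeasurableSpace.comap (J p.1 p.2) ‹_›

variable [Fintype V] [MeasurableSingletonClass V] {mΩ : MeasurableSpace Ω} {J : ℕ → V → Ω → V}

lemma measurable_pastChoices_ancestor (t : ℕ) (i : V) :
    Measurable[pastChoices J t] (ancestor J t i) := by
  induction t generalizing i with
  | zero => exact measurable_const
  | succ t ih =>
    have hJ : Measurable[pastChoices J (t + 1)] (J (t + 1) i) :=
      (comap_measurable _).mono (le_iSup₂_of_le (t + 1, i) (le_refl (t + 1)) le_rfl) le_rfl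
    have hmono : pastChoices J t ≤ pastChoices J (t + 1) :=
      biSup_mono fun p (hp : p.1 ≤ t) => hp.trans t.le_succ
    exact (measurable_of_countable fun q : V × (V → V) => q.2 q.1).comp
      (hJ.prodMk (@measurable_pi_lambda _ _ _ (pastChoices J (t + 1)) _ _
        fun k => (ih k).mono hmono le_rfl))

variable {γ : Type*} [MeasurableSpace γ]

structure IsNeighborChoices (P : Measure Ω) (w : V → V → ℝ) (Z : Ω → γ) (J : ℕ → V → Ω → V) :
    Prop where
  measurable : ∀ t i, Measurable (J t i)
  iIndepFun : iIndepFun (fun p : ℕ × V => J p.1 p.2) P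
  indepFun : IndepFun Z (fun ω (p : ℕ × V) => J p.1 p.2 ω) P
  law : ∀ t i j, P {ω | J t i ω = j} = ENNReal.ofReal (w i j)

namespace IsNeighborChoices

variable {P : Measure Ω} {w : V → V → ℝ} {Z : Ω → γ}

lemma measurable_ancestor (hJ : IsNeighborChoices P w Z J) (t : ℕ) (i : V) :
    Measurable (ancestor J t i) :=
  (measurable_pastChoices_ancestor t i).mono
    (iSup₂_le fun p _ => (hJ.measurable p.1 p.2).comap_le) le_rfl

variable [IsProbabilityMeasure P]

lemma indepFun_ancestor (hJ : IsNeighborChoices P w Z J) (hZ : Measurable Z) (t : ℕ) (i : V) :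
    IndepFun (J (t + 1) i) (fun ω => (Z ω, fun k => ancestor J t k ω)) P := by
  have hle : ∀ p : ℕ × V, MeasurableSpace.comap (J p.1 p.2) ‹_› ≤ mΩ :=
    fun p => (hJ.measurable p.1 p.2).comap_le
  have hpast : pastChoices J t ≤ mΩ := iSup₂_le fun p _ => hle p
  have hcoord : ∀ p : ℕ × V, Measurable[MeasurableSpace.comap
      (fun ω (p : ℕ × V) => J p.1 p.2 ω) MeasurableSpace.pi] (J p.1 p.2) :=
    fun p => (measurable_pi_apply p).comp (comap_measurable (fun ω (p : ℕ × V) => J p.1 p.2 ω))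
  have hchoices : MeasurableSpace.comap (J (t + 1) i) ‹_› ⊔ pastChoices J t
      ≤ MeasurableSpace.comap (fun ω (p : ℕ × V) => J p.1 p.2 ω) MeasurableSpace.pi :=
    sup_le (hcoord (t + 1, i)).comap_le (iSup₂_le fun p _ => (hcoord p).comap_le)
  have hdisj : Disjoint ({(t + 1, i)} : Set (ℕ × V)) {p | p.1 ≤ t} := by
    simp
  have hJpast := indep_iSup_of_disjoint hle hJ.iIndepFun.iIndep hdisj
  rw [iSup_singleton] at hJpast
  have h := indep_sup_of_indep_sup_of_indep hZ.comap_le (hle (t + 1, i)) hpast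
    (indep_of_indep_of_le_right ((IndepFun_iff_Indep _ _ _).1 hJ.indepFun) hchoices) hJpast
  refine (IndepFun_iff_Indep _ _ _).2 (indep_of_indep_of_le_right h (Measurable.comap_le ?_))
  exact ((comap_measurable Z).mono le_sup_left le_rfl).prodMk
    (@measurable_pi_lambda _ _ _ (MeasurableSpace.comap Z ‹_› ⊔ pastChoices J t) _ _
      fun k => (measurable_pastChoices_ancestor t k).mono le_sup_right le_rfl)

variable [Finite γ] [MeasurableSingletonClass γ]

lemma integral_ancestor_succ (hJ : IsNeighborChoices P w Z J) (hZ : Measurable Z)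
    (hw : ∀ i j, 0 ≤ w i j) (F : γ → V → ℝ) (t : ℕ) (i : V) :
    ∫ ω, F (Z ω) (ancestor J (t + 1) i ω) ∂P
      = ∑ k, w i k * ∫ ω, F (Z ω) (ancestor J t k ω) ∂P := by
  classical
  have hanc : Measurable fun ω k => ancestor J t k ω :=
    measurable_pi_lambda _ (hJ.measurable_ancestor t)
  have hsplit : ∀ ω, F (Z ω) (ancestor J (t + 1) i ω)
      = ∑ k, (if J (t + 1) i ω = k then 1 else 0) * F (Z ω) (ancestor J t k ω) := by
    simp [ancestor]
  simp_rw [hsplit]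
  rw [integral_finsetSum _ fun k _ => integrable_comp_of_finite
    (h := fun q : V × γ × (V → V) => (if q.1 = k then (1 : ℝ) else 0) * F q.2.1 (q.2.2 k))
    ((hJ.measurable _ _).prodMk (hZ.prodMk hanc))]
  refine Finset.sum_congr rfl fun k _ => ?_
  rw [(hJ.indepFun_ancestor hZ t i).integral_fun_comp_mul_comp
    (f := fun j => if j = k then (1 : ℝ) else 0) (g := fun q => F q.1 (q.2 k))
    (hJ.measurable _ _).aemeasurable (hZ.prodMk hanc).aemeasurable .of_discrete .of_discrete,
    integral_comp_eq_sum (hJ.measurable _ _) fun j => if j = k then (1 : ℝ) else 0]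
  have hprob : P.real (J (t + 1) i ⁻¹' {k}) = w i k := by
    rw [measureReal_def, show J (t + 1) i ⁻¹' {k} = {ω | J (t + 1) i ω = k} from rfl, hJ.law,
      ENNReal.toReal_ofReal (hw i k)]
  simp [hprob]

lemma sum_integral_ancestor (hJ : IsNeighborChoices P w Z J) (hZ : Measurable Z)
    (hw : ∀ i j, 0 ≤ w i j) {α : V → ℝ} (hαstat : ∀ j, ∑ i, α i * w i j = α j)
    (F : γ → V → ℝ) (t : ℕ) :
    ∑ i, α i * ∫ ω, F (Z ω) (ancestor J t i ω) ∂P = ∑ i, α i * ∫ ω, F (Z ω) i ∂P := by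
  induction t with
  | zero => rfl
  | succ t ih =>
    calc ∑ i, α i * ∫ ω, F (Z ω) (ancestor J (t + 1) i ω) ∂P
        = ∑ k, (∑ i, α i * w i k) * ∫ ω, F (Z ω) (ancestor J t k ω) ∂P := by
          simp_rw [hJ.integral_ancestor_succ hZ hw, Finset.mul_sum, Finset.sum_mul, mul_assoc]
          exact Finset.sum_comm
      _ = _ := by simp_rw [hαstat]; exact ih

lemma integral_limit (hJ : IsNeighborChoices P w Z J) (hZ : Measurable Z)
    (hw : ∀ i j, 0 ≤ w i j) {α : V → ℝ} (hαsum : ∑ i, α i = 1)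
    (hαstat : ∀ j, ∑ i, α i * w i j = α j) {β : Type*} {x : γ → V → β} {A : ℕ → V → Ω → β}
    (hA0 : ∀ i ω, A 0 i ω = x (Z ω) i) (hAstep : ∀ t i ω, A (t + 1) i ω = A t (J (t + 1) i ω) ω)
    {Alim : Ω → β} (hAlim : ∀ᵐ ω ∂P, ∃ T, ∀ t, T ≤ t → ∀ i, A t i ω = Alim ω) (G : γ → β → ℝ) :
    ∫ ω, G (Z ω) (Alim ω) ∂P = ∑ j, α j * ∫ ω, G (Z ω) (x (Z ω) j) ∂P := by
  have hA : ∀ t i ω, A t i ω = x (Z ω) (ancestor J t i ω) := fun t i ω =>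
    (eq_initial_ancestor hAstep t i ω).trans (hA0 _ _)
  obtain ⟨C, hC⟩ := (Set.finite_range fun q : γ × V => |G q.1 (x q.1 q.2)|).bddAbove
  have hconv : ∀ i, Filter.Tendsto (fun t => ∫ ω, G (Z ω) (A t i ω) ∂P) Filter.atTop
      (nhds (∫ ω, G (Z ω) (Alim ω) ∂P)) := fun i => by
    refine tendsto_integral_of_dominated_convergence (fun _ => C) (fun t => ?_)
      (integrable_const C) (fun t => .of_forall fun ω => ?_) ?_
    · simp_rw [hA]
      exact (Measurable.of_discrete (f := fun q : γ × V => G q.1 (x q.1 q.2)) |>.comp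
        (hZ.prodMk (hJ.measurable_ancestor t i))).aestronglyMeasurable
    · rw [hA, Real.norm_eq_abs]
      exact hC ⟨(Z ω, ancestor J t i ω), rfl⟩
    · filter_upwards [hAlim] with ω ⟨T, hT⟩
      exact tendsto_atTop_of_eventually_const fun t ht => by rw [hT t ht i]
  have hstat : ∀ t, ∑ i, α i * ∫ ω, G (Z ω) (A t i ω) ∂P
      = ∑ j, α j * ∫ ω, G (Z ω) (x (Z ω) j) ∂P := fun t => by
    simp_rw [hA]
    exact hJ.sum_integral_ancestor hZ hw hαstat (fun z k => G z (x z k)) t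
  calc ∫ ω, G (Z ω) (Alim ω) ∂P = ∑ i, α i * ∫ ω, G (Z ω) (Alim ω) ∂P := by
        rw [← Finset.sum_mul, hαsum, one_mul]
    _ = _ := tendsto_nhds_unique (tendsto_finsetSum _ fun i _ => (hconv i).const_mul (α i))
        (by simp_rw [hstat]; exact tendsto_const_nhds)

lemma condExp_limit (hJ : IsNeighborChoices P w Z J) (hZ : Measurable Z)
    (hw : ∀ i j, 0 ≤ w i j) {α : V → ℝ} (hαsum : ∑ i, α i = 1)
    (hαstat : ∀ j, ∑ i, α i * w i j = α j) {β : Type*} [MeasurableSpace β] [Finite β]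
    [MeasurableSingletonClass β] {x : γ → V → β} {A : ℕ → V → Ω → β}
    (hA0 : ∀ i ω, A 0 i ω = x (Z ω) i) (hAstep : ∀ t i ω, A (t + 1) i ω = A t (J (t + 1) i ω) ω)
    {Alim : Ω → β} (hAlimmeas : Measurable Alim)
    (hAlim : ∀ᵐ ω ∂P, ∃ T, ∀ t, T ≤ t → ∀ i, A t i ω = Alim ω) (G : γ → β → ℝ) :
    P[fun ω => G (Z ω) (Alim ω) | MeasurableSpace.comap Z ‹_›]
      =ᵐ[P] fun ω => ∑ j, α j * G (Z ω) (x (Z ω) j) := by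
  classical
  refine condExp_comap_eq_of_forall_setIntegral hZ
    (integrable_comp_of_finite (hZ.prodMk hAlimmeas) fun q => G q.1 q.2)
    (fun z => ∑ j, α j * G z (x z j)) fun T hT => ?_
  set G_T : γ → β → ℝ := fun z b => if z ∈ T then G z b else 0
  have hrestrict : ∀ y : Ω → β,
      ∫ ω, G_T (Z ω) (y ω) ∂P = ∫ ω in Z ⁻¹' T, G (Z ω) (y ω) ∂P := fun y => by
    rw [← integral_indicator (hZ hT)]
    congr 1
  rw [integral_finsetSum _ fun j _ =>
      (integrable_comp_of_finite hZ fun z => α j * G z (x z j)).integrableOn,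
    ← hrestrict, hJ.integral_limit hZ hw hαsum hαstat hA0 hAstep hAlim G_T]
  simp_rw [integral_const_mul, hrestrict]

end IsNeighborChoices

end Voter

theorem voter_model_learning_general
    (V : Type) [Fintype V] [MeasurableSpace V] [MeasurableSingletonClass V]
    (w : V → V → ℝ)
    (hnonneg : ∀ i j, 0 ≤ w i j)
    -- the stationary distribution of the chain with transition matrix `w`
    (α : V → ℝ)
    (hαsum : ∑ i, α i = 1)
    (hαstat : ∀ j, ∑ i, α i * w i j = α j)
    {Ω : Type} [MeasurableSpace Ω] (P : Measure Ω) [IsProbabilityMeasure P]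
    (δ : ℝ) (hδ0 : 0 < δ) (hδhalf : δ < 1 / 2)
    -- the state of the world and the private signals, with their joint law:
    -- `S` uniform and, given `S`, the `X i` i.i.d. with `P(X i = S) = 1/2 + δ`
    (S : Ω → Bool) (hSmeas : Measurable S)
    (X : V → Ω → Bool) (hXmeas : ∀ i, Measurable (X i))
    (hlaw : ∀ (s : Bool) (f : V → Bool),
      P {ω | S ω = s ∧ ∀ i, X i ω = f i}
        = ENNReal.ofReal (1 / 2 * ∏ i, (if f i = s then 1 / 2 + δ else 1 / 2 - δ)))
    -- the independent random neighbor choices, `P(J t i = j) = w i j`,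
    -- independent of the signals and the state of the world
    (J : ℕ → V → Ω → V)
    (hJmeas : ∀ t i, Measurable (J t i))
    (hJindep : iIndepFun
      (fun p : ℕ × V => J p.1 p.2) P)
    (hJlaw : ∀ t i j, P {ω | J t i ω = j} = ENNReal.ofReal (w i j))
    (hJS : IndepFun (fun ω => (S ω, fun i => X i ω))
      (fun ω (p : ℕ × V) => J p.1 p.2 ω) P)
    -- the voter dynamics started from the private signals
    (A : ℕ → V → Ω → Bool)
    (hA0 : ∀ i ω, A 0 i ω = X i ω)
    (hAstep : ∀ t i ω, A (t + 1) i ω = A t (J (t + 1) i ω) ω)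
    -- the common limit action, which exists a.s.
    (Alim : Ω → Bool) (hAlimmeas : Measurable Alim)
    (hAlim : ∀ᵐ ω ∂P, ∃ T : ℕ, ∀ t : ℕ, T ≤ t → ∀ i : V, A t i ω = Alim ω) :
    (P[(fun ω => if Alim ω = true then (1 : ℝ) else 0) |
        MeasurableSpace.comap (fun ω (i : V) => X i ω) MeasurableSpace.pi]
      =ᵐ[P] fun ω => ∑ i, α i * (if X i ω = true then 1 else 0)) ∧
    (P[(fun ω => if Alim ω = S ω then (1 : ℝ) else 0) |
        MeasurableSpace.comap (fun ω => (S ω, fun i : V => X i ω)) inferInstance]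
      =ᵐ[P] fun ω => ∑ i, α i * (if X i ω = S ω then 1 else 0)) ∧
    P {ω | Alim ω = S ω} = ENNReal.ofReal (1 / 2 + δ) := by
  have hX : Measurable fun ω i => X i ω := measurable_pi_lambda _ hXmeas
  have hZ : Measurable fun ω => (S ω, fun i => X i ω) := hSmeas.prodMk hX
  have hJ : IsNeighborChoices P w (fun ω => (S ω, fun i => X i ω)) J :=
    ⟨hJmeas, hJindep, hJS, hJlaw⟩
  have hJX : IsNeighborChoices P w (fun ω i => X i ω) J :=
    ⟨hJmeas, hJindep, hJS.comp measurable_snd measurable_id, hJlaw⟩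
  refine ⟨hJX.condExp_limit hX hnonneg hαsum hαstat (x := id) hA0 hAstep hAlimmeas hAlim
      fun _ b => if b = true then 1 else 0,
    hJ.condExp_limit hZ hnonneg hαsum hαstat (x := Prod.snd) hA0 hAstep hAlimmeas hAlim
      fun z b => if b = z.1 then 1 else 0, ?_⟩
  have hsignal := integral_signal_eq_state hSmeas hXmeas
    (abs_le.2 ⟨by linarith, by linarith⟩) hlaw
  have h := hJ.integral_limit hZ hnonneg hαsum hαstat (x := Prod.snd) hA0 hAstep hAlim
    fun z b => if b = z.1 then (1 : ℝ) else 0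
  simp_rw [hsignal, ← Finset.sum_mul, hαsum, one_mul] at h
  rw [← ofReal_measureReal, ← h, ← integral_indicator_one (measurableSet_eq_fun hAlimmeas hSmeas)]
  congr 2
  ext ω
  simp [Set.indicator_apply]

/-- **(Non-)learning in the voter model.**
Run the voter model on a finite set `V` with row-stochastic weights `w` (with `w i i > 0` and
strongly connected support) and stationary distribution `α`, starting from conditionally
i.i.d. private signals `X i` with `P(X i = S) = 1/2 + δ`, where `S` is uniform on `{0,1}`.
Let `A∞` be the a.s. common limit action.  Then
(1) `P(A∞ = 1 | X) = ∑ i, α i • X i`;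
(2) `P(A∞ = S | S, X) = ∑ i, α i • 1{X i = S}`;
(3) `P(A∞ = S) = 1/2 + δ`. -/
theorem voter_model_learning
    (V : Type) [Fintype V] [Nonempty V] [MeasurableSpace V] [MeasurableSingletonClass V]
    (w : V → V → ℝ)
    (hnonneg : ∀ i j, 0 ≤ w i j)
    (hrow : ∀ i, ∑ j, w i j = 1)
    (hdiag : ∀ i, 0 < w i i)
    (hconn : ∀ i j : V, Relation.ReflTransGen (fun a b => 0 < w a b) i j)
    -- the stationary distribution of the chain with transition matrix `w`
    (α : V → ℝ)
    (hαnonneg : ∀ i, 0 ≤ α i) (hαsum : ∑ i, α i = 1)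
    (hαstat : ∀ j, ∑ i, α i * w i j = α j)
    {Ω : Type} [MeasurableSpace Ω] (P : Measure Ω) [IsProbabilityMeasure P]
    (δ : ℝ) (hδ0 : 0 < δ) (hδhalf : δ < 1 / 2)
    -- the state of the world and the private signals, with their joint law:
    -- `S` uniform and, given `S`, the `X i` i.i.d. with `P(X i = S) = 1/2 + δ`
    (S : Ω → Bool) (hSmeas : Measurable S)
    (X : V → Ω → Bool) (hXmeas : ∀ i, Measurable (X i))
    (hlaw : ∀ (s : Bool) (f : V → Bool),
      P {ω | S ω = s ∧ ∀ i, X i ω = f i}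
        = ENNReal.ofReal (1 / 2 * ∏ i, (if f i = s then 1 / 2 + δ else 1 / 2 - δ)))
    -- the independent random neighbor choices, `P(J t i = j) = w i j`,
    -- independent of the signals and the state of the world
    (J : ℕ → V → Ω → V)
    (hJmeas : ∀ t i, Measurable (J t i))
    (hJindep : iIndepFun
      (fun p : ℕ × V => J p.1 p.2) P)
    (hJlaw : ∀ t i j, P {ω | J t i ω = j} = ENNReal.ofReal (w i j))
    (hJS : IndepFun (fun ω => (S ω, fun i => X i ω))
      (fun ω (p : ℕ × V) => J p.1 p.2 ω) P)
    -- the voter dynamics started from the private signals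
    (A : ℕ → V → Ω → Bool)
    (hA0 : ∀ i ω, A 0 i ω = X i ω)
    (hAstep : ∀ t i ω, A (t + 1) i ω = A t (J (t + 1) i ω) ω)
    -- the common limit action, which exists a.s.
    (Alim : Ω → Bool) (hAlimmeas : Measurable Alim)
    (hAlim : ∀ᵐ ω ∂P, ∃ T : ℕ, ∀ t : ℕ, T ≤ t → ∀ i : V, A t i ω = Alim ω) :
    (P[(fun ω => if Alim ω = true then (1 : ℝ) else 0) |
        MeasurableSpace.comap (fun ω (i : V) => X i ω) MeasurableSpace.pi]
      =ᵐ[P] fun ω => ∑ i, α i * (if X i ω = true then 1 else 0)) ∧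
    (P[(fun ω => if Alim ω = S ω then (1 : ℝ) else 0) |
        MeasurableSpace.comap (fun ω => (S ω, fun i : V => X i ω)) inferInstance]
      =ᵐ[P] fun ω => ∑ i, α i * (if X i ω = S ω then 1 else 0)) ∧
    P {ω | Alim ω = S ω} = ENNReal.ofReal (1 / 2 + δ) :=
  voter_model_learning_general V w hnonneg α hαsum hαstat P δ hδ0 hδhalf S hSmeas X hXmeas hlaw J
    hJmeas hJindep hJlaw hJS A hA0 hAstep Alim hAlimmeas hAlim
end

section
/- (Goles–Olivos) Let G = (V,E) be a finite undirected graph in which |N(i)| is odd for every vertex i, and let (A_t)_{t≥0} be any trajectory of majority dynamics on G (with arbitrary initial opinions A_0 ∈ {-1,+1}^V). Then A_{t+1}^i = A_{t-1}^i for every vertex i and every t ≥ |E|; that is, after at most |E| steps the entire system enters a cycle of period at most two. -/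
/-!
The quantity `P(x) = ∑ᵢ |∑_{j ∈ N(i)} x j|` is a Lyapunov function. Because the neighbourhood
relation is symmetric, `P(x) = ∑ᵢ x i · Sᵢ(y)` for the successor `y` of `x`, where `Sᵢ` is the
closed-neighbourhood sum, while `P(y) = ∑ᵢ z i · Sᵢ(y)` for the successor `z` of `y`. Hence
`P(y) - P(x) = ∑ᵢ (z i - x i) Sᵢ(y) ≥ 0`, and every vertex with `z i ≠ x i` adds `2 |Sᵢ(y)| ≥ 2`
(the sums are odd). As `|V| ≤ P ≤ |V| + 2|E|`, and a trajectory that is not yet 2-periodic has never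
been, a failure of period two at time `t` forces `t ≤ |E|`; in the extreme case `t = |E|` all the
slack is used up, which makes the offending vertex isolated, and isolated vertices never change.
-/

open Finset

theorem mul_le_abs_of_eq_one_or_eq_neg_one {a : ℤ} (ha : a = 1 ∨ a = -1) (s : ℤ) :
    a * s ≤ |s| := by
  rcases ha with rfl | rfl
  · simpa using le_abs_self s
  · simpa using neg_le_abs s

namespace SimpleGraph

variable {V : Type} [Fintype V] [DecidableEq V] (G : SimpleGraph V) [DecidableRel G.Adj]

def closedNeighborFinset (i : V) : Finset V := insert i (G.neighborFinset i)

def closedNeighborSum (x : V → ℤ) (i : V) : ℤ := ∑ j ∈ G.closedNeighborFinset i, x j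

def majorityStep (x : V → ℤ) (i : V) : ℤ := if 0 < G.closedNeighborSum x i then 1 else -1

def majorityPotential (x : V → ℤ) : ℤ := ∑ i, |G.closedNeighborSum x i|

variable {G}

theorem mem_closedNeighborFinset_comm {i j : V} :
    j ∈ G.closedNeighborFinset i ↔ i ∈ G.closedNeighborFinset j := by
  simp only [closedNeighborFinset, mem_insert, mem_neighborFinset, G.adj_comm, eq_comm]

theorem card_closedNeighborFinset (i : V) : #(G.closedNeighborFinset i) = G.degree i + 1 := by
  rw [closedNeighborFinset, card_insert_of_notMem (G.notMem_neighborFinset_self i),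
    card_neighborFinset_eq_degree]

theorem sum_mul_closedNeighborSum_comm (x y : V → ℤ) :
    ∑ i, y i * G.closedNeighborSum x i = ∑ i, x i * G.closedNeighborSum y i := by
  simp only [closedNeighborSum, mul_sum]
  rw [sum_comm' (t' := univ) (s' := G.closedNeighborFinset)
    (fun _ _ => by simp [mem_closedNeighborFinset_comm])]
  exact sum_congr rfl fun _ _ => sum_congr rfl fun _ _ => mul_comm _ _

theorem majorityStep_eq_one_or_eq_neg_one (x : V → ℤ) (i : V) :
    G.majorityStep x i = 1 ∨ G.majorityStep x i = -1 := by
  unfold majorityStep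
  split_ifs <;> simp

theorem majorityStep_mul_closedNeighborSum (x : V → ℤ) (i : V) :
    G.majorityStep x i * G.closedNeighborSum x i = |G.closedNeighborSum x i| := by
  unfold majorityStep
  split_ifs with h
  · rw [one_mul, abs_of_pos h]
  · rw [neg_one_mul, abs_of_nonpos (not_lt.mp h)]

theorem majorityPotential_eq_sum_mul (x : V → ℤ) :
    G.majorityPotential x = ∑ i, x i * G.closedNeighborSum (G.majorityStep x) i := by
  rw [← sum_mul_closedNeighborSum_comm, majorityPotential]
  exact sum_congr rfl fun i _ => (majorityStep_mul_closedNeighborSum x i).symm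

theorem majorityPotential_majorityStep_sub (x : V → ℤ) :
    G.majorityPotential (G.majorityStep x) - G.majorityPotential x =
      ∑ i, (|G.closedNeighborSum (G.majorityStep x) i| -
        x i * G.closedNeighborSum (G.majorityStep x) i) := by
  rw [majorityPotential_eq_sum_mul x, majorityPotential, sum_sub_distrib]

theorem abs_sub_mul_closedNeighborSum_of_ne_majorityStep {x y : V → ℤ} {i : V}
    (hxi : x i = 1 ∨ x i = -1) (hi : x i ≠ G.majorityStep y i) :
    |G.closedNeighborSum y i| - x i * G.closedNeighborSum y i =
      2 * |G.closedNeighborSum y i| := by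
  have hneg : x i = -G.majorityStep y i := by
    rcases hxi with h | h <;> rcases majorityStep_eq_one_or_eq_neg_one (G := G) y i with h' | h' <;>
      simp_all
  rw [hneg, neg_mul, majorityStep_mul_closedNeighborSum]
  ring

theorem majorityStep_eq_self_of_degree_eq_zero {x : V → ℤ} {i : V} (hxi : x i = 1 ∨ x i = -1)
    (hi : G.degree i = 0) : G.majorityStep x i = x i := by
  have hN : G.closedNeighborFinset i = {i} := by
    rw [closedNeighborFinset, card_eq_zero.mp ((G.card_neighborFinset_eq_degree i).trans hi)]
    rfl
  rcases hxi with h | h <;> simp [majorityStep, closedNeighborSum, hN, h]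

section Spin

variable {x : V → ℤ} (hx : ∀ j, x j = 1 ∨ x j = -1)
include hx

theorem abs_closedNeighborSum_le (i : V) : |G.closedNeighborSum x i| ≤ G.degree i + 1 := by
  calc |G.closedNeighborSum x i| ≤ ∑ j ∈ G.closedNeighborFinset i, |x j| :=
        abs_sum_le_sum_abs _ _
    _ = G.degree i + 1 := by
        rw [sum_congr rfl fun j _ => (by rcases hx j with h | h <;> simp [h] : |x j| = 1),
          sum_const, card_closedNeighborFinset]
        simp

theorem one_le_abs_closedNeighborSum {i : V} (hodd : Odd #(G.closedNeighborFinset i)) :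
    1 ≤ |G.closedNeighborSum x i| := by
  have hsum : Odd (G.closedNeighborSum x i) := by
    have heven : Even (∑ j ∈ G.closedNeighborFinset i, (x j - 1)) :=
      even_sum _ fun j _ => by rcases hx j with h | h <;> simp [h]
    have := heven.add_odd (hodd.natCast (R := ℤ))
    rwa [sum_sub_distrib, sum_const, nsmul_one, sub_add_cancel] at this
  exact Int.one_le_abs fun h => by simp [h] at hsum

theorem majorityPotential_add_two_mul_abs_le {i : V}
    (hi : x i ≠ G.majorityStep (G.majorityStep x) i) :
    G.majorityPotential x + 2 * |G.closedNeighborSum (G.majorityStep x) i| ≤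
      G.majorityPotential (G.majorityStep x) := by
  have := single_le_sum (fun j _ => sub_nonneg.mpr
    (mul_le_abs_of_eq_one_or_eq_neg_one (hx j) (G.closedNeighborSum (G.majorityStep x) j)))
    (mem_univ i)
  rw [abs_sub_mul_closedNeighborSum_of_ne_majorityStep (hx i) hi,
    ← majorityPotential_majorityStep_sub] at this
  linarith

theorem card_le_majorityPotential (hodd : ∀ i, Odd #(G.closedNeighborFinset i)) :
    (Fintype.card V : ℤ) ≤ G.majorityPotential x := by
  calc (Fintype.card V : ℤ) = ∑ _i : V, 1 := by simp
    _ ≤ _ := sum_le_sum fun i _ => one_le_abs_closedNeighborSum hx (hodd i)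

theorem majorityPotential_add_le (i : V) :
    G.majorityPotential x + (G.degree i + 1 - |G.closedNeighborSum x i|) ≤
      Fintype.card V + 2 * #G.edgeFinset := by
  have hslack := single_le_sum
    (fun j _ => sub_nonneg.mpr (abs_closedNeighborSum_le (G := G) hx j)) (mem_univ i)
  have hdeg : ∑ j : V, ((G.degree j : ℤ) + 1) = Fintype.card V + 2 * #G.edgeFinset := by
    rw [sum_add_distrib, ← Nat.cast_sum, sum_degrees_eq_twice_card_edges]
    simp [add_comm]
  rw [sum_sub_distrib, hdeg] at hslack
  unfold majorityPotential
  linarith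

end Spin

section Trajectory

variable {A : ℕ → V → ℤ} (hA : ∀ t, A (t + 1) = G.majorityStep (A t))
include hA

theorem trajectory_eq_one_or_eq_neg_one (h0 : ∀ i, A 0 i = 1 ∨ A 0 i = -1) :
    ∀ t i, A t i = 1 ∨ A t i = -1
  | 0 => h0
  | t + 1 => by rw [hA t]; exact majorityStep_eq_one_or_eq_neg_one (A t)

theorem trajectory_ne_of_succ_ne {s : ℕ} (h : A (s + 3) ≠ A (s + 1)) : A (s + 2) ≠ A s :=
  fun hs => h (by rw [hA (s + 2), hs, ← hA s])

theorem card_add_two_mul_le_majorityPotential (h0 : ∀ i, A 0 i = 1 ∨ A 0 i = -1)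
    (hodd : ∀ i, Odd #(G.closedNeighborFinset i)) :
    ∀ s, A (s + 2) ≠ A s → (Fintype.card V : ℤ) + 2 * s ≤ G.majorityPotential (A s)
  | 0, _ => by simpa using card_le_majorityPotential (trajectory_eq_one_or_eq_neg_one hA h0 0) hodd
  | s + 1, hs => by
    have ih := card_add_two_mul_le_majorityPotential h0 hodd s (trajectory_ne_of_succ_ne hA hs)
    obtain ⟨i, hi⟩ := Function.ne_iff.mp (trajectory_ne_of_succ_ne hA hs)
    have hspin := trajectory_eq_one_or_eq_neg_one hA h0 s
    have hstep := majorityPotential_add_two_mul_abs_le hspin (i := i)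
      (by rw [← hA, ← hA]; exact hi.symm)
    have hone := one_le_abs_closedNeighborSum (G := G)
      (trajectory_eq_one_or_eq_neg_one hA h0 (s + 1)) (hodd i)
    rw [← hA] at hstep
    push_cast
    linarith

theorem trajectory_apply_eq_of_degree_eq_zero (h0 : ∀ i, A 0 i = 1 ∨ A 0 i = -1) {i : V}
    (hi : G.degree i = 0) : ∀ t, A t i = A 0 i
  | 0 => rfl
  | t + 1 => by
    rw [hA, majorityStep_eq_self_of_degree_eq_zero (trajectory_eq_one_or_eq_neg_one hA h0 t i) hi,
      trajectory_apply_eq_of_degree_eq_zero h0 hi t]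

end Trajectory

end SimpleGraph

open SimpleGraph in
/-- **Goles–Olivos: period two for majority dynamics on finite graphs.**
Let `G` be a finite undirected graph in which `|N i|` is odd for every vertex `i`
(where `N i` is the set of neighbors of `i` together with `i` itself), and let `A` be a
trajectory of majority dynamics with arbitrary `±1` initial opinions.  Then
`A (t+1) i = A (t-1) i` for every vertex `i` and every `t ≥ |E|`. -/
theorem goles_olivos_period_two (V : Type) [Fintype V] [DecidableEq V]
    (G : SimpleGraph V) [DecidableRel G.Adj]
    (hodd : ∀ i : V, Odd (insert i (G.neighborFinset i)).card)
    (A : ℕ → V → ℤ)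
    (hinit : ∀ i, A 0 i = 1 ∨ A 0 i = -1)
    (hupdate : ∀ t i,
      A (t + 1) i = if 0 < ∑ j ∈ insert i (G.neighborFinset i), A t j then 1 else -1) :
    ∀ i : V, ∀ t : ℕ, G.edgeFinset.card ≤ t → A (t + 1) i = A (t - 1) i := by
  have hA : ∀ t, A (t + 1) = G.majorityStep (A t) := fun t => funext (hupdate t)
  have hspin := trajectory_eq_one_or_eq_neg_one hA hinit
  intro i t ht
  obtain _ | s := t
  · have hdeg : G.degree i = 0 := Nat.le_zero.mp (G.degree_le_card_edgeFinset i |>.trans ht)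
    exact trajectory_apply_eq_of_degree_eq_zero hA hinit hdeg 1
  show A (s + 2) i = A s i
  by_contra hi
  have hgrowth := card_add_two_mul_le_majorityPotential hA hinit hodd s
    fun h => hi (congrFun h i)
  have hstep := majorityPotential_add_two_mul_abs_le (hspin s) (i := i)
    (by rw [← hA, ← hA]; exact Ne.symm hi)
  have hslack := majorityPotential_add_le (G := G) (hspin (s + 1)) i
  have hone := one_le_abs_closedNeighborSum (G := G) (hspin (s + 1)) (hodd i)
  rw [← hA] at hstep
  -- chaining the bounds leaves `|Sᵢ| + deg i ≤ 1`
  have hdeg : G.degree i = 0 := by zify at ht; omega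
  exact hi <| (trajectory_apply_eq_of_degree_eq_zero hA hinit hdeg _).trans
    (trajectory_apply_eq_of_degree_eq_zero hA hinit hdeg _).symm
end

section
/- (Ginosar–Holzman, Moran) Let G be an infinite connected undirected graph with all degrees at most d, with |N(i)| odd for every vertex i, and with asymptotic growth rate 𝔤(G) = limsup_r n_r(G,i)^{1/r} < (d+1)/(d-1) (this limsup is independent of the base vertex i). Then for every initial opinion configuration A_0 ∈ {-1,+1}^V of majority dynamics and every vertex i there exists a time T_i such that A_{t+1}^i = A_{t-1}^i for all t ≥ T_i; that is, each agent's opinion sequence eventually has period at most two. -/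
/-!
Fix the vertex `i` and pick `μ < 1` with `(d - 1) / (d + 1) < μ` and
`μ · limsup n_r^(1/r) < 1`; the growth hypothesis is exactly what makes such a `μ` exist, and it
makes `∑_j μ ^ dist i j` finite. Weight the pair `(j, k)`, `k ∈ N(j)`, by the symmetric quantity
`μ ^ max (dist i j) (dist i k)` and consider the Goles–Olivos functional
`E(t) = ∑_j A_{t+1}(j) W_j(A_t)`, where `W_j(x)` is the weighted sum of `x` over `N(j)`.
It converges absolutely and is bounded by `d ∑_j μ ^ dist i j`. Symmetry of the weights gives
`E(t+1) - E(t) = ∑_j (A_{t+2}(j) - A_t(j)) W_j(A_{t+1})`. On `N(j)` the weights lie in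
`[μ ^ (ρ + 1), μ ^ ρ]` with `ρ = dist i j`, while `A_{t+2}(j)` is the sign of the unweighted
sum, so `A_{t+2}(j) W_j(A_{t+1}) ≥ μ ^ ρ (1 + μ - (1 - μ) d) / 2 > 0`. Hence `E` is nondecreasing
and increases by at least `1 + μ - (1 - μ) d` whenever `A_{t+2}(i) ≠ A_t(i)`, which can therefore
happen only finitely often.
-/

open Finset Filter

lemma le_sum_mul_of_abs_le_one_of_mem_Icc {ι : Type*} {s : Finset ι} {v y : ι → ℝ}
    {m M : ℝ} (hy : ∀ k ∈ s, |y k| ≤ 1) (hv : ∀ k ∈ s, v k ∈ Set.Icc m M) :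
    ((M + m) * ∑ k ∈ s, y k - (M - m) * #s) / 2 ≤ ∑ k ∈ s, v k * y k := by
  have key : ∀ k ∈ s, ((M + m) * y k - (M - m)) / 2 ≤ v k * y k := by
    intro k hk
    obtain ⟨hy₁, hy₂⟩ := abs_le.mp (hy k hk)
    obtain ⟨hm, hM⟩ := hv k hk
    -- `v y - ((M + m) y - (M - m)) / 2 = ((v - m) (1 + y) + (M - v) (1 - y)) / 2`
    nlinarith [mul_nonneg (sub_nonneg.mpr hm) (neg_le_iff_add_nonneg.mp hy₁),
      mul_nonneg (sub_nonneg.mpr hM) (sub_nonneg.mpr hy₂)]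
  calc ((M + m) * ∑ k ∈ s, y k - (M - m) * #s) / 2
      = ∑ k ∈ s, ((M + m) * y k - (M - m)) / 2 := by
        rw [← sum_div, sum_sub_distrib, ← mul_sum, sum_const, nsmul_eq_mul]
        ring
    _ ≤ ∑ k ∈ s, v k * y k := sum_le_sum key

lemma sum_ne_zero_of_odd_card {ι : Type*} {s : Finset ι} {x : ι → ℤ}
    (hx : ∀ k ∈ s, x k = 1 ∨ x k = -1) (hs : Odd #s) : ∑ k ∈ s, x k ≠ 0 := by
  have hmod : ((∑ k ∈ s, x k : ℤ) : ZMod 2) = 1 := by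
    rw [Int.cast_sum, sum_congr rfl fun k hk => show ((x k : ℤ) : ZMod 2) = 1 by
      rcases hx k hk with h | h <;> rw [h] <;> decide]
    simpa using ZMod.natCast_eq_one_iff_odd.mpr hs
  intro h
  rw [h] at hmod
  exact absurd hmod (by decide)

lemma ite_le_mul_sub_mul {e x : ℤ} (he : e = 1 ∨ e = -1) (hx : x = 1 ∨ x = -1) {W κ : ℝ}
    (hκ : κ ≤ e * W) : (if e = x then 0 else 2 * κ) ≤ e * W - x * W := by
  rcases he with rfl | rfl <;> rcases hx with rfl | rfl <;> norm_num at hκ ⊢ <;> linarith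

lemma exists_forall_of_le_of_add_ite_le {F : ℕ → ℝ} {C δ : ℝ} {P : ℕ → Prop}
    [DecidablePred P] (hδ : 0 < δ) (hC : ∀ t, F t ≤ C)
    (hstep : ∀ t, F t + (if P t then 0 else δ) ≤ F (t + 1)) :
    ∃ T, ∀ t, T ≤ t → P t := by
  have hmono : Monotone F := monotone_nat_of_le_succ fun t => by
    have := hstep t
    split_ifs at this <;> linarith
  by_contra! hfreq
  have hgrow : ∀ n : ℕ, ∃ t, F 0 + n * δ ≤ F t := by
    intro n
    induction n with
    | zero => exact ⟨0, by simp⟩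
    | succ n ih =>
      obtain ⟨t, ht⟩ := ih
      obtain ⟨t', htt', hP⟩ := hfreq t
      have := hstep t'
      rw [if_neg hP] at this
      exact ⟨t' + 1, by push_cast; linarith [hmono htt']⟩
  obtain ⟨n, hn⟩ := exists_nat_gt ((C - F 0) / δ)
  obtain ⟨t, ht⟩ := hgrow n
  rw [div_lt_iff₀ hδ] at hn
  linarith [hC t]

lemma isBoundedUnder_rpow_inv_of_le_pow {x : ℕ → ℝ} {D : ℝ} (hx0 : ∀ r, 0 ≤ x r)
    (hx : ∀ r, x r ≤ D ^ r) : IsBoundedUnder (· ≤ ·) atTop fun r => x r ^ (r : ℝ)⁻¹ := by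
  refine isBoundedUnder_of_eventually_le (a := D) ?_
  filter_upwards [eventually_ne_atTop 0] with r hr
  calc x r ^ (r : ℝ)⁻¹ ≤ (D ^ r) ^ (r : ℝ)⁻¹ := by gcongr; exacts [hx0 r, hx r]
    _ = D := Real.pow_rpow_inv_natCast (by simpa using (hx0 1).trans (hx 1)) hr

lemma summable_mul_pow_of_limsup_rpow_inv_lt {x : ℕ → ℝ} {μ : ℝ} (hx0 : ∀ r, 0 ≤ x r)
    (hbdd : IsBoundedUnder (· ≤ ·) atTop fun r => x r ^ (r : ℝ)⁻¹) (hμ : 0 < μ)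
    (h : limsup (fun r => x r ^ (r : ℝ)⁻¹) atTop < μ⁻¹) :
    Summable fun r => x r * μ ^ r := by
  obtain ⟨c, hc, hcμ⟩ := exists_between (max_lt h (inv_pos.mpr hμ))
  have hc0 : 0 ≤ c := (le_max_right _ _).trans hc.le
  have hcμ1 : c * μ < 1 := by
    simpa [hμ.ne'] using mul_lt_mul_of_pos_right hcμ hμ
  refine .of_norm_bounded_eventually_nat
    (summable_geometric_of_lt_one (mul_nonneg hc0 hμ.le) hcμ1) ?_
  filter_upwards [eventually_lt_of_limsup_lt ((le_max_left _ _).trans_lt hc) hbdd,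
    eventually_ne_atTop 0] with r hr hr0
  rw [Real.norm_of_nonneg (mul_nonneg (hx0 r) (pow_nonneg hμ.le r)), mul_pow]
  gcongr
  calc x r = (x r ^ (r : ℝ)⁻¹) ^ r := (Real.rpow_inv_natCast_pow (hx0 r) hr0).symm
    _ ≤ c ^ r := by gcongr; exact Real.rpow_nonneg (hx0 r) _

lemma summable_comp_of_summable_ncard_mul {α : Type*} {f : α → ℕ} {g : ℕ → ℝ}
    (hg : ∀ r, 0 ≤ g r) (hfin : ∀ r, {a | f a = r}.Finite)
    (h : Summable fun r => ({a | f a = r}.ncard : ℝ) * g r) : Summable fun a => g (f a) := by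
  rw [← (Equiv.sigmaFiberEquiv f).summable_iff]
  refine (summable_sigma_of_nonneg fun _ => hg _).mpr ⟨fun r => ?_, ?_⟩
  · have : Finite {a // f a = r} := hfin r
    exact .of_finite
  · convert h using 2 with r
    calc ∑' y : {a // f a = r}, g (f y) = ∑' _ : {a // f a = r}, g r :=
          tsum_congr fun y => by rw [y.2]
      _ = _ := by rw [tsum_const, nsmul_eq_mul]; rfl

lemma exists_lt_inv_and_pos {d : ℕ} (hd : 1 < d) {L : ℝ} (hL : L < (d + 1) / (d - 1)) :
    ∃ μ : ℝ, 0 < μ ∧ μ < 1 ∧ L < μ⁻¹ ∧ 0 < 1 + μ - (1 - μ) * d := by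
  have hd' : (1 : ℝ) < d := mod_cast hd
  have hb : 1 < ((d : ℝ) + 1) / (d - 1) := by rw [one_lt_div (by linarith)]; linarith
  obtain ⟨c, hc, hcb⟩ := exists_between (max_lt hL hb)
  have hc1 : 1 < c := (le_max_right _ _).trans_lt hc
  rw [lt_div_iff₀ (by linarith)] at hcb
  refine ⟨c⁻¹, by positivity, inv_lt_one_of_one_lt₀ hc1,
    by rw [inv_inv]; exact (le_max_left _ _).trans_lt hc, ?_⟩
  have : 0 < c * (1 + c⁻¹ - (1 - c⁻¹) * d) := by
    field_simp
    nlinarith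
  exact pos_of_mul_pos_right this (by linarith)

namespace SimpleGraph

variable {V : Type*} {G : SimpleGraph V}

def closedNbhd (G : SimpleGraph V) [∀ v, Fintype (G.neighborSet v)] [DecidableEq V] (v : V) :
    Finset V :=
  insert v (G.neighborFinset v)

section closedNbhd

variable [∀ v, Fintype (G.neighborSet v)] [DecidableEq V]

@[simp]
lemma mem_closedNbhd {v w : V} : w ∈ G.closedNbhd v ↔ w = v ∨ G.Adj v w := by
  simp [closedNbhd]

lemma mem_closedNbhd_comm {v w : V} : w ∈ G.closedNbhd v ↔ v ∈ G.closedNbhd w := by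
  simp only [mem_closedNbhd, adj_comm, eq_comm]

lemma dist_le_dist_add_one_of_mem_closedNbhd (i : V) {j k : V} (hk : k ∈ G.closedNbhd j) :
    G.dist i k ≤ G.dist i j + 1 := by
  rcases mem_closedNbhd.mp hk with rfl | hadj
  · omega
  · simpa [dist_eq_one_iff_adj.mpr hadj] using hadj.reachable.dist_triangle_right i

lemma tsum_sum_closedNbhd_comm {h : V → V → ℝ}
    (hh : Summable fun j => ∑ k ∈ G.closedNbhd j, |h j k|) :
    ∑' j, ∑ k ∈ G.closedNbhd j, h j k = ∑' j, ∑ k ∈ G.closedNbhd j, h k j := by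
  set H : V → V → ℝ := fun j k => if k ∈ G.closedNbhd j then h j k else 0
  have tsum_ite_mem : ∀ (f : V → V → ℝ) j,
      ∑' k, (if k ∈ G.closedNbhd j then f j k else 0) = ∑ k ∈ G.closedNbhd j, f j k := by
    intro f j
    rw [tsum_eq_sum fun k hk => if_neg hk]
    exact sum_congr rfl fun k hk => if_pos hk
  have hH : Summable (Function.uncurry H) := by
    refine Summable.of_abs ((summable_prod_of_nonneg fun _ => abs_nonneg _).mpr ⟨?_, ?_⟩)
    · exact fun j => summable_of_ne_finset_zero (s := G.closedNbhd j) fun k hk => by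
        simp [H, hk]
    · convert hh using 2 with j
      simpa only [H, Function.uncurry_apply_pair, apply_ite, abs_zero] using
        tsum_ite_mem (fun j k => |h j k|) j
  calc ∑' j, ∑ k ∈ G.closedNbhd j, h j k = ∑' j, ∑' k, H j k := by simp only [H, tsum_ite_mem]
    _ = ∑' k, ∑' j, H j k := hH.tsum_comm.symm
    _ = ∑' k, ∑ j ∈ G.closedNbhd k, h j k := by
      congr 1 with k
      simp only [H, mem_closedNbhd_comm (w := k)]
      exact tsum_ite_mem (fun k j => h j k) k

end closedNbhd

lemma Connected.exists_adj_dist_eq_of_dist_eq_succ (hconn : G.Connected) {i k : V} {r : ℕ}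
    (h : G.dist i k = r + 1) : ∃ j, G.Adj j k ∧ G.dist i j = r := by
  obtain ⟨p, hp⟩ := (hconn k i).exists_walk_length_eq_dist
  cases p with
  | nil => simp_all
  | @cons _ j _ hadj q =>
    refine ⟨j, hadj.symm, le_antisymm ?_ ?_⟩
    · have := dist_le q.reverse
      simp only [Walk.length_reverse, Walk.length_cons, dist_comm (u := k)] at this hp
      omega
    · have := hadj.symm.reachable.dist_triangle_right i
      rw [dist_eq_one_iff_adj.mpr hadj.symm] at this
      omega

lemma Connected.setOf_dist_eq_succ_subset [∀ v, Fintype (G.neighborSet v)] [DecidableEq V]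
    (hconn : G.Connected) (i : V) (r : ℕ) :
    {k | G.dist i k = r + 1} ⊆ ⋃ j ∈ {j | G.dist i j = r}, (G.closedNbhd j : Set V) := by
  intro k hk
  obtain ⟨j, hadj, hj⟩ := hconn.exists_adj_dist_eq_of_dist_eq_succ hk
  exact Set.mem_biUnion (x := j) hj (by simp [hadj])

lemma Connected.finite_setOf_dist_eq_and_ncard_le [∀ v, Fintype (G.neighborSet v)]
    [DecidableEq V] (hconn : G.Connected) {d : ℕ} (hdeg : ∀ j, #(G.closedNbhd j) ≤ d) (i : V) :
    ∀ r : ℕ, {j | G.dist i j = r}.Finite ∧ {j | G.dist i j = r}.ncard ≤ d ^ r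
  | 0 => by
    have : {j | G.dist i j = 0} = {i} := by ext j; simp [hconn.dist_eq_zero_iff, eq_comm]
    rw [this]
    simp
  | r + 1 => by
    obtain ⟨hfin, hcard⟩ := hconn.finite_setOf_dist_eq_and_ncard_le hdeg i r
    have hsub : {k | G.dist i k = r + 1} ⊆ ↑(hfin.toFinset.biUnion G.closedNbhd) := by
      simpa using hconn.setOf_dist_eq_succ_subset i r
    refine ⟨(finite_toSet _).subset hsub, ?_⟩
    calc {k | G.dist i k = r + 1}.ncard
        ≤ #(hfin.toFinset.biUnion G.closedNbhd) := by
          exact (Set.ncard_le_ncard hsub (finite_toSet _)).trans_eq (Set.ncard_coe_finset _)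
      _ ≤ ∑ j ∈ hfin.toFinset, #(G.closedNbhd j) := card_biUnion_le
      _ ≤ #hfin.toFinset * d := sum_le_card_nsmul _ _ _ fun j _ => hdeg j
      _ ≤ d ^ r * d := by
          rw [← Set.ncard_eq_toFinset_card _ hfin]; exact Nat.mul_le_mul_right d hcard
      _ = d ^ (r + 1) := (pow_succ d r).symm

lemma Connected.summable_pow_dist [∀ v, Fintype (G.neighborSet v)] [DecidableEq V]
    (hconn : G.Connected) {d : ℕ} (hdeg : ∀ j, #(G.closedNbhd j) ≤ d) (i : V) {μ : ℝ}
    (hμ : 0 < μ)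
    (h : limsup (fun r : ℕ => ({j | G.dist i j = r}.ncard : ℝ) ^ (r : ℝ)⁻¹) atTop < μ⁻¹) :
    Summable fun j => μ ^ G.dist i j := by
  have hsphere := hconn.finite_setOf_dist_eq_and_ncard_le hdeg i
  refine summable_comp_of_summable_ncard_mul (fun r => by positivity)
    (fun r => (hsphere r).1) ?_
  refine summable_mul_pow_of_limsup_rpow_inv_lt (fun r => by positivity) ?_ hμ h
  exact isBoundedUnder_rpow_inv_of_le_pow (D := d) (fun r => by positivity)
    fun r => mod_cast (hsphere r).2

section weightedSum

variable (G) [∀ v, Fintype (G.neighborSet v)] [DecidableEq V]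

noncomputable def weightedSum (i : V) (μ : ℝ) (x : V → ℝ) (j : V) : ℝ :=
  ∑ k ∈ G.closedNbhd j, μ ^ max (G.dist i j) (G.dist i k) * x k

noncomputable def energy (i : V) (μ : ℝ) (x y : V → ℝ) : ℝ :=
  ∑' j, x j * G.weightedSum i μ y j

variable {G} {i : V} {μ : ℝ} {d : ℕ} {x y z : V → ℝ}

lemma le_mul_weightedSum (hμ0 : 0 ≤ μ) (hμ1 : μ ≤ 1) (hx : ∀ k, |x k| ≤ 1)
    {e : ℝ} (he : |e| ≤ 1) {j : V} (hmaj : 1 ≤ e * ∑ k ∈ G.closedNbhd j, x k)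
    (hcard : #(G.closedNbhd j) ≤ d) :
    μ ^ G.dist i j * (1 + μ - (1 - μ) * d) / 2 ≤ e * G.weightedSum i μ x j := by
  have hv : ∀ k ∈ G.closedNbhd j,
      μ ^ max (G.dist i j) (G.dist i k) ∈ Set.Icc (μ ^ (G.dist i j + 1)) (μ ^ G.dist i j) :=
    fun k hk => ⟨pow_le_pow_of_le_one hμ0 hμ1
        (max_le (Nat.le_succ _) (dist_le_dist_add_one_of_mem_closedNbhd i hk)),
      pow_le_pow_of_le_one hμ0 hμ1 (le_max_left _ _)⟩
  have hy : ∀ k ∈ G.closedNbhd j, |e * x k| ≤ 1 := fun k _ => by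
    rw [abs_mul]; exact mul_le_one₀ he (abs_nonneg _) (hx k)
  have hbound := le_sum_mul_of_abs_le_one_of_mem_Icc hy hv
  rw [← mul_sum, pow_succ] at hbound
  have hρ := pow_nonneg hμ0 (G.dist i j)
  have hgap : 0 ≤ μ ^ G.dist i j - μ ^ G.dist i j * μ := by nlinarith
  have hcard' : (#(G.closedNbhd j) : ℝ) ≤ d := mod_cast hcard
  calc μ ^ G.dist i j * (1 + μ - (1 - μ) * d) / 2
      ≤ ((μ ^ G.dist i j + μ ^ G.dist i j * μ) * (e * ∑ k ∈ G.closedNbhd j, x k)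
          - (μ ^ G.dist i j - μ ^ G.dist i j * μ) * #(G.closedNbhd j)) / 2 := by
        nlinarith [mul_le_mul_of_nonneg_left hcard' hgap,
          mul_le_mul_of_nonneg_left hmaj (add_nonneg hρ (mul_nonneg hρ hμ0))]
    _ ≤ _ := hbound
    _ = e * G.weightedSum i μ x j := by
        simp only [weightedSum, mul_sum]; exact sum_congr rfl fun k _ => by ring

lemma sum_abs_mul_weight_le (hμ0 : 0 ≤ μ) (hμ1 : μ ≤ 1) (hx : ∀ k, |x k| ≤ 1)
    (hy : ∀ k, |y k| ≤ 1) (hdeg : ∀ j, #(G.closedNbhd j) ≤ d) (j : V) :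
    ∑ k ∈ G.closedNbhd j, |x j * (μ ^ max (G.dist i j) (G.dist i k) * y k)|
      ≤ d * μ ^ G.dist i j := by
  calc ∑ k ∈ G.closedNbhd j, |x j * (μ ^ max (G.dist i j) (G.dist i k) * y k)|
      ≤ ∑ _k ∈ G.closedNbhd j, μ ^ G.dist i j := by
        refine sum_le_sum fun k _ => ?_
        rw [abs_mul, abs_mul, abs_of_nonneg (pow_nonneg hμ0 _)]
        calc |x j| * (μ ^ max (G.dist i j) (G.dist i k) * |y k|)
            ≤ 1 * (μ ^ max (G.dist i j) (G.dist i k) * 1) := by gcongr; exacts [hx j, hy k]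
          _ ≤ μ ^ G.dist i j := by
            simpa using pow_le_pow_of_le_one hμ0 hμ1 (le_max_left _ _)
    _ ≤ d * μ ^ G.dist i j := by
        rw [sum_const, nsmul_eq_mul]; gcongr; exact_mod_cast hdeg j

lemma abs_mul_weightedSum_le (hμ0 : 0 ≤ μ) (hμ1 : μ ≤ 1) (hx : ∀ k, |x k| ≤ 1)
    (hy : ∀ k, |y k| ≤ 1) (hdeg : ∀ j, #(G.closedNbhd j) ≤ d) (j : V) :
    |x j * G.weightedSum i μ y j| ≤ d * μ ^ G.dist i j := by
  rw [weightedSum, mul_sum]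
  exact (abs_sum_le_sum_abs _ _).trans (sum_abs_mul_weight_le hμ0 hμ1 hx hy hdeg j)

lemma summable_mul_weightedSum (hμ0 : 0 ≤ μ) (hμ1 : μ ≤ 1) (hx : ∀ k, |x k| ≤ 1)
    (hy : ∀ k, |y k| ≤ 1) (hdeg : ∀ j, #(G.closedNbhd j) ≤ d)
    (hw : Summable fun j => μ ^ G.dist i j) :
    Summable fun j => x j * G.weightedSum i μ y j :=
  (hw.mul_left (d : ℝ)).of_norm_bounded (abs_mul_weightedSum_le hμ0 hμ1 hx hy hdeg)

lemma energy_le (hμ0 : 0 ≤ μ) (hμ1 : μ ≤ 1) (hx : ∀ k, |x k| ≤ 1) (hy : ∀ k, |y k| ≤ 1)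
    (hdeg : ∀ j, #(G.closedNbhd j) ≤ d) (hw : Summable fun j => μ ^ G.dist i j) :
    G.energy i μ x y ≤ d * ∑' j, μ ^ G.dist i j := by
  rw [energy, ← tsum_mul_left]
  exact (summable_mul_weightedSum hμ0 hμ1 hx hy hdeg hw).tsum_le_tsum
    (fun j => (le_abs_self _).trans (abs_mul_weightedSum_le hμ0 hμ1 hx hy hdeg j))
    (hw.mul_left (d : ℝ))

lemma energy_comm (hμ0 : 0 ≤ μ) (hμ1 : μ ≤ 1) (hx : ∀ k, |x k| ≤ 1) (hy : ∀ k, |y k| ≤ 1)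
    (hdeg : ∀ j, #(G.closedNbhd j) ≤ d) (hw : Summable fun j => μ ^ G.dist i j) :
    G.energy i μ x y = G.energy i μ y x := by
  have habs : Summable fun j => ∑ k ∈ G.closedNbhd j,
      |x j * (μ ^ max (G.dist i j) (G.dist i k) * y k)| :=
    (hw.mul_left (d : ℝ)).of_nonneg_of_le (fun j => sum_nonneg fun k _ => abs_nonneg _)
      (sum_abs_mul_weight_le hμ0 hμ1 hx hy hdeg)
  simp only [energy, weightedSum, mul_sum]
  rw [tsum_sum_closedNbhd_comm habs]
  congr 1 with j
  exact sum_congr rfl fun k _ => by rw [max_comm]; ring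

lemma energy_sub_energy (hμ0 : 0 ≤ μ) (hμ1 : μ ≤ 1) (hx : ∀ k, |x k| ≤ 1)
    (hy : ∀ k, |y k| ≤ 1) (hz : ∀ k, |z k| ≤ 1) (hdeg : ∀ j, #(G.closedNbhd j) ≤ d)
    (hw : Summable fun j => μ ^ G.dist i j) :
    G.energy i μ z y - G.energy i μ y x
      = ∑' j, (z j * G.weightedSum i μ y j - x j * G.weightedSum i μ y j) := by
  rw [energy_comm hμ0 hμ1 hy hx hdeg hw, energy, energy,
    (summable_mul_weightedSum hμ0 hμ1 hz hy hdeg hw).tsum_sub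
      (summable_mul_weightedSum hμ0 hμ1 hx hy hdeg hw)]

end weightedSum

structure IsMajorityDynamics (G : SimpleGraph V) [∀ v, Fintype (G.neighborSet v)]
    [DecidableEq V] (A : ℕ → V → ℤ) : Prop where
  init : ∀ i, A 0 i = 1 ∨ A 0 i = -1
  succ : ∀ t i, A (t + 1) i = if 0 < ∑ j ∈ G.closedNbhd i, A t j then 1 else -1

namespace IsMajorityDynamics

variable [∀ v, Fintype (G.neighborSet v)] [DecidableEq V] {A : ℕ → V → ℤ}

lemma eq_one_or_neg_one (hA : G.IsMajorityDynamics A) : ∀ t j, A t j = 1 ∨ A t j = -1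
  | 0, j => hA.init j
  | t + 1, j => by rw [hA.succ]; split_ifs <;> simp

lemma abs_le_one (hA : G.IsMajorityDynamics A) (t : ℕ) (j : V) : |(A t j : ℝ)| ≤ 1 := by
  rcases hA.eq_one_or_neg_one t j with h | h <;> simp [h]

lemma one_le_mul_sum (hA : G.IsMajorityDynamics A) {j : V} (hodd : Odd #(G.closedNbhd j))
    (t : ℕ) : 1 ≤ A (t + 1) j * ∑ k ∈ G.closedNbhd j, A t k := by
  have := sum_ne_zero_of_odd_card (fun k _ => hA.eq_one_or_neg_one t k) hodd
  rw [hA.succ]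
  split_ifs <;> omega

lemma succ_eq_of_card_closedNbhd_le_one (hA : G.IsMajorityDynamics A) {j : V}
    (hj : #(G.closedNbhd j) ≤ 1) (t : ℕ) : A (t + 1) j = A t j := by
  have hsingle : {j} = G.closedNbhd j :=
    eq_of_subset_of_card_le (by simp) (by simpa using hj)
  rw [hA.succ, ← hsingle, sum_singleton]
  rcases hA.eq_one_or_neg_one t j with h | h <;> simp [h]

lemma energy_add_ite_le (hA : G.IsMajorityDynamics A) {d : ℕ}
    (hdeg : ∀ j, #(G.closedNbhd j) ≤ d) (hodd : ∀ j, Odd #(G.closedNbhd j)) {i : V} {μ : ℝ}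
    (hμ0 : 0 ≤ μ) (hμ1 : μ ≤ 1) (hε : 0 ≤ 1 + μ - (1 - μ) * d)
    (hw : Summable fun j => μ ^ G.dist i j) (t : ℕ) :
    G.energy i μ (fun j => A (t + 1) j) (fun j => A t j)
        + (if A (t + 2) i = A t i then 0 else 1 + μ - (1 - μ) * d)
      ≤ G.energy i μ (fun j => A (t + 2) j) (fun j => A (t + 1) j) := by
  have hincr : ∀ j,
      (if A (t + 2) j = A t j then 0 else μ ^ G.dist i j * (1 + μ - (1 - μ) * d))
      ≤ A (t + 2) j * G.weightedSum i μ (fun k => A (t + 1) k) j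
        - A t j * G.weightedSum i μ (fun k => A (t + 1) k) j := fun j => by
    have hmaj : (1 : ℝ) ≤ A (t + 2) j * ∑ k ∈ G.closedNbhd j, (A (t + 1) k : ℝ) := by
      exact_mod_cast hA.one_le_mul_sum (hodd j) (t + 1)
    have := ite_le_mul_sub_mul (hA.eq_one_or_neg_one (t + 2) j) (hA.eq_one_or_neg_one t j)
      (le_mul_weightedSum (i := i) hμ0 hμ1 (hA.abs_le_one (t + 1)) (hA.abs_le_one (t + 2) j)
        hmaj (hdeg j))
    rwa [mul_div_cancel₀ _ two_ne_zero] at this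
  have hsummable : Summable fun j => A (t + 2) j * G.weightedSum i μ (fun k => A (t + 1) k) j
      - A t j * G.weightedSum i μ (fun k => A (t + 1) k) j :=
    (summable_mul_weightedSum hμ0 hμ1 (hA.abs_le_one _) (hA.abs_le_one _) hdeg hw).sub
      (summable_mul_weightedSum hμ0 hμ1 (hA.abs_le_one _) (hA.abs_le_one _) hdeg hw)
  rw [← le_sub_iff_add_le', energy_sub_energy hμ0 hμ1 (hA.abs_le_one _) (hA.abs_le_one _)
    (hA.abs_le_one _) hdeg hw]
  calc (if A (t + 2) i = A t i then 0 else 1 + μ - (1 - μ) * d) ≤ _ := by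
        simpa using hincr i
    _ ≤ _ := hsummable.le_tsum i fun j _ =>
        le_trans (by split_ifs <;> positivity) (hincr j)

end IsMajorityDynamics

end SimpleGraph

/-- **Ginosar–Holzman, Moran: eventual period two for each agent on infinite graphs of
subcritical growth.**  Let `G` be an infinite connected undirected graph with all degrees
`|N i| ≤ d`, with `|N i|` odd for every `i`, and with asymptotic growth rate
`limsup_r n_r(G,i)^(1/r) < (d+1)/(d-1)` (for every base vertex `i`), where `n_r(G,i)` is the
number of vertices at distance exactly `r` from `i`.  Then for every `±1` initial configuration
of majority dynamics and every vertex `i` there is a time `T` with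
`A (t+2) i = A t i` for all `t ≥ T`. -/
theorem majority_dynamics_period_two_subcritical_growth
    (V : Type) [Infinite V] (G : SimpleGraph V) [∀ v : V, Fintype (G.neighborSet v)]
    [DecidableEq V]
    (hconn : G.Connected)
    (d : ℕ)
    (hdeg : ∀ i : V, (insert i (G.neighborFinset i)).card ≤ d)
    (hodd : ∀ i : V, Odd (insert i (G.neighborFinset i)).card)
    (hgrowth : ∀ i : V,
      Filter.limsup
          (fun r : ℕ => (({j : V | G.dist i j = r}.ncard : ℝ)) ^ ((r : ℝ)⁻¹))
          Filter.atTop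
        < ((d : ℝ) + 1) / ((d : ℝ) - 1))
    (A : ℕ → V → ℤ)
    (hinit : ∀ i, A 0 i = 1 ∨ A 0 i = -1)
    (hupdate : ∀ t i,
      A (t + 1) i = if 0 < ∑ j ∈ insert i (G.neighborFinset i), A t j then 1 else -1) :
    ∀ i : V, ∃ T : ℕ, ∀ t : ℕ, T ≤ t → A (t + 2) i = A t i := by
  intro i
  have hA : G.IsMajorityDynamics A := ⟨hinit, hupdate⟩
  rcases le_or_gt d 1 with hd | hd
  · have hi := hA.succ_eq_of_card_closedNbhd_le_one ((hdeg i).trans hd)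
    exact ⟨0, fun t _ => (hi (t + 1)).trans (hi t)⟩
  obtain ⟨μ, hμ0, hμ1, hμL, hε⟩ := exists_lt_inv_and_pos hd (hgrowth i)
  have hw := hconn.summable_pow_dist hdeg i hμ0 hμL
  exact exists_forall_of_le_of_add_ite_le hε
    (fun t => SimpleGraph.energy_le hμ0.le hμ1.le (hA.abs_le_one _) (hA.abs_le_one _) hdeg hw)
    (hA.energy_add_ite_le hdeg hodd hμ0.le hμ1.le hε.le hw)
end

section
/- (Geanakoplos) Consider Bayesian agents on a finite directed graph G = (V,E): the state S is binary, the joint vector of private signals (X_i)_{i∈V} takes values in a finite set of size M with an arbitrary joint distribution together with S, u : {0,1} × 𝒜 → ℝ is a utility function on a finite action set, H_t^i is the σ-algebra generated by X_i and the actions A_s^j for j ∈ N(i) and s < t, and A_t^i is an H_t^i-measurable action maximizing E[u(S, a) | H_t^i] (with a fixed deterministic tie-breaking rule). Then the actions of every agent converge after at most M·|V| time periods: A_t^i = A_{t'}^i for all i ∈ V and all t, t' ≥ M·|V|. Furthermore, for each agent i the number of time periods t at which A_{t+1}^i ≠ A_t^i is at most M. -/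
open scoped Classical

/-!
Agent `i`'s information at time `t` is a partition of the finite sample space, refining as `t`
grows, and never finer than the partition by the joint signal vector, so it has at most `M`
classes. The action at time `t` is a function of the class alone. Hence an agent changes its
action only when its partition strictly refines, which happens at most `M` times; and once no
agent's partition refines in one period, no action changes and nothing ever refines again. The
total number of classes over all agents is at most `M·|V|`, so such a period occurs by then.
-/

/-- The σ-algebra `H_t^i` is the partition of the (finite) sample space into the classes of
this relation. -/
def infoRel {Ω V 𝒮 𝒜 : Type*} (E : V → V → Prop) (X : V → Ω → 𝒮)
    (A : ℕ → V → Ω → 𝒜) (t : ℕ) (i : V) (ω ω' : Ω) : Prop :=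
  X i ω = X i ω' ∧ ∀ j : V, (E i j ∨ j = i) → ∀ s : ℕ, s < t → A s j ω = A s j ω'

/-- Maximizing this unnormalized sum over `a` is the same as maximizing the conditional
expectation `E[u(S, a) | H_t^i]` at `ω`. -/
noncomputable def infoScore {Ω V 𝒮 𝒜 : Type*} [Fintype Ω] (p : Ω → ℝ) (S : Ω → Bool)
    (u : Bool → 𝒜 → ℝ) (E : V → V → Prop) (X : V → Ω → 𝒮)
    (A : ℕ → V → Ω → 𝒜) (t : ℕ) (i : V) (ω : Ω) (a : 𝒜) : ℝ :=
  ∑ ω' : Ω, (if infoRel E X A t i ω ω' then p ω' * u (S ω') a else 0)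

namespace Setoid

variable {α β : Type*} {r s : Setoid α}

theorem nat_card_quotient_le_of_le [Finite α] (h : r ≤ s) :
    Nat.card (Quotient s) ≤ Nat.card (Quotient r) :=
  Nat.card_le_card_of_surjective (map_of_le h) (Quotient.ind fun a => ⟨⟦a⟧, rfl⟩)

theorem le_of_le_of_nat_card_quotient_le [Finite α] (h : r ≤ s)
    (hc : Nat.card (Quotient r) ≤ Nat.card (Quotient s)) : s ≤ r := by
  have hbij := Function.Surjective.bijective_of_nat_card_le
    (f := map_of_le h) (Quotient.ind fun a => ⟨⟦a⟧, rfl⟩) hc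
  exact fun x y hxy => Quotient.exact (hbij.injective (Quotient.sound hxy))

theorem nat_card_quotient_le_ncard_range [Finite α] {f : α → β} (h : ker f ≤ r) :
    Nat.card (Quotient r) ≤ (Set.range f).ncard :=
  calc Nat.card (Quotient r) ≤ Nat.card (Quotient (ker f)) := nat_card_quotient_le_of_le h
    _ = (Set.range f).ncard := by
      rw [Nat.card_congr (quotientKerEquivRange f), Nat.card_coe_set_eq]

end Setoid

theorem card_filter_lt_succ_add_le {f : ℕ → ℕ} (hf : Monotone f) (T : ℕ) :
    ((Finset.range T).filter fun t => f t < f (t + 1)).card + f 0 ≤ f T := by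
  induction T with
  | zero => simp
  | succ T ih =>
    rw [Finset.range_add_one, Finset.filter_insert]
    split_ifs with h
    · rw [Finset.card_insert_of_notMem (by simp)]
      omega
    · exact ih.trans (hf T.le_succ)

theorem exists_le_map_succ_eq_of_monotone {f : ℕ → ℕ} (hf : Monotone f) {B : ℕ}
    (hB : f (B + 1) ≤ B) : ∃ t ≤ B, f (t + 1) = f t := by
  by_contra! hne
  have hall : ((Finset.range (B + 1)).filter fun t => f t < f (t + 1)) = Finset.range (B + 1) :=
    Finset.filter_true_of_mem fun t ht =>
      (hf t.le_succ).lt_of_ne' (hne t (Nat.lt_succ_iff.mp (Finset.mem_range.mp ht)))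
  have := card_filter_lt_succ_add_le hf (B + 1)
  rw [hall, Finset.card_range] at this
  omega

section Myopic

variable {Ω V 𝒮 𝒜 : Type*} {E : V → V → Prop} {X : V → Ω → 𝒮}
  {A : ℕ → V → Ω → 𝒜}

def infoSetoid (E : V → V → Prop) (X : V → Ω → 𝒮) (A : ℕ → V → Ω → 𝒜) (t : ℕ) (i : V) :
    Setoid Ω where
  r := infoRel E X A t i
  iseqv :=
    { refl := fun _ => ⟨rfl, fun _ _ _ _ => rfl⟩
      symm := fun h => ⟨h.1.symm, fun j hj s hs => (h.2 j hj s hs).symm⟩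
      trans := fun h h' =>
        ⟨h.1.trans h'.1, fun j hj s hs => (h.2 j hj s hs).trans (h'.2 j hj s hs)⟩ }

theorem infoSetoid_apply {t : ℕ} {i : V} {ω ω' : Ω} :
    infoSetoid E X A t i ω ω' ↔ infoRel E X A t i ω ω' :=
  Iff.rfl

theorem infoRel_succ_iff {t : ℕ} {i : V} {ω ω' : Ω} :
    infoRel E X A (t + 1) i ω ω' ↔
      infoRel E X A t i ω ω' ∧ ∀ j, (E i j ∨ j = i) → A t j ω = A t j ω' := by
  simp only [infoRel, Nat.lt_succ_iff_lt_or_eq, or_imp, forall_and, forall_eq]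
  tauto

theorem infoSetoid_succ_le (t : ℕ) (i : V) : infoSetoid E X A (t + 1) i ≤ infoSetoid E X A t i :=
  fun _ _ h => (infoRel_succ_iff.mp h).1

theorem infoSetoid_succ_succ_eq {t : ℕ} (hsucc : ∀ j, A (t + 1) j = A t j) (i : V) :
    infoSetoid E X A (t + 2) i = infoSetoid E X A (t + 1) i := by
  ext ω ω'
  simp only [infoSetoid_apply, infoRel_succ_iff (t := t + 1), hsucc, and_iff_left_iff_imp]
  exact fun h => (infoRel_succ_iff.mp h).2

noncomputable def numInfoClasses (E : V → V → Prop) (X : V → Ω → 𝒮) (A : ℕ → V → Ω → 𝒜)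
    (t : ℕ) (i : V) : ℕ :=
  Nat.card (Quotient (infoSetoid E X A t i))

theorem numInfoClasses_monotone [Finite Ω] (i : V) :
    Monotone fun t => numInfoClasses E X A t i :=
  monotone_nat_of_le_succ fun t => Setoid.nat_card_quotient_le_of_le (infoSetoid_succ_le t i)

theorem infoSetoid_succ_eq_of_numInfoClasses_le [Finite Ω] {t : ℕ} {i : V}
    (h : numInfoClasses E X A (t + 1) i ≤ numInfoClasses E X A t i) :
    infoSetoid E X A (t + 1) i = infoSetoid E X A t i :=
  (infoSetoid_succ_le t i).antisymm
    (Setoid.le_of_le_of_nat_card_quotient_le (infoSetoid_succ_le t i) h)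

variable [Fintype Ω] [Fintype 𝒜]

def IsMyopicPlay (p : Ω → ℝ) (S : Ω → Bool) (u : Bool → 𝒜 → ℝ) (E : V → V → Prop)
    (X : V → Ω → 𝒮) (tb : Finset 𝒜 → 𝒜) (A : ℕ → V → Ω → 𝒜) : Prop :=
  ∀ t i ω, A t i ω = tb (Finset.univ.filter fun a : 𝒜 =>
    ∀ b : 𝒜, infoScore p S u E X A t i ω b ≤ infoScore p S u E X A t i ω a)

namespace IsMyopicPlay

variable {p : Ω → ℝ} {S : Ω → Bool} {u : Bool → 𝒜 → ℝ} {tb : Finset 𝒜 → 𝒜}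

theorem action_eq_of_infoRel_iff (hA : IsMyopicPlay p S u E X tb A) {t t' : ℕ} {i : V}
    {ω ω' : Ω} (h : ∀ ω'', infoRel E X A t i ω ω'' ↔ infoRel E X A t' i ω' ω'') :
    A t i ω = A t' i ω' := by
  have hscore (a : 𝒜) : infoScore p S u E X A t i ω a = infoScore p S u E X A t' i ω' a :=
    Finset.sum_congr rfl fun ω'' _ => if_congr (h ω'') rfl rfl
  simp only [hA t i ω, hA t' i ω', hscore]

theorem ker_signals_le_infoSetoid (hA : IsMyopicPlay p S u E X tb A) (t : ℕ) (i : V) :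
    Setoid.ker (fun ω j => X j ω) ≤ infoSetoid E X A t i := by
  intro ω ω' hX
  induction t using Nat.strong_induction_on generalizing i with
  | _ t ih =>
    refine ⟨congrFun hX i, fun j _ s hs => hA.action_eq_of_infoRel_iff fun ω'' => ?_⟩
    have hrel : infoSetoid E X A s j ω ω' := ih s hs j
    exact ⟨(infoSetoid E X A s j).trans' ((infoSetoid E X A s j).symm' hrel),
      (infoSetoid E X A s j).trans' hrel⟩

theorem action_succ_eq (hA : IsMyopicPlay p S u E X tb A) {t : ℕ} {i : V}
    (h : infoSetoid E X A (t + 1) i = infoSetoid E X A t i) : A (t + 1) i = A t i := by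
  funext ω
  refine hA.action_eq_of_infoRel_iff fun ω'' => ?_
  rw [← infoSetoid_apply, h, infoSetoid_apply]

theorem action_eq_of_le (hA : IsMyopicPlay p S u E X tb A) {t₀ : ℕ}
    (h₀ : ∀ i, infoSetoid E X A (t₀ + 1) i = infoSetoid E X A t₀ i) {t : ℕ} (ht : t₀ ≤ t)
    (i : V) : A t i = A t₀ i := by
  suffices ∀ t ≥ t₀, ∀ i, infoSetoid E X A (t + 1) i = infoSetoid E X A t i ∧ A t i = A t₀ i from
    (this t ht i).2
  intro t ht
  induction t, ht using Nat.le_induction with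
  | base => exact fun i => ⟨h₀ i, rfl⟩
  | succ t _ ih =>
    have hstep (j : V) : A (t + 1) j = A t j := hA.action_succ_eq (ih j).1
    exact fun i => ⟨infoSetoid_succ_succ_eq hstep i, (hstep i).trans (ih i).2⟩

theorem numInfoClasses_le (hA : IsMyopicPlay p S u E X tb A) (t : ℕ) (i : V) :
    numInfoClasses E X A t i ≤ (Set.range fun ω j => X j ω).ncard :=
  Setoid.nat_card_quotient_le_ncard_range (hA.ker_signals_le_infoSetoid t i)

theorem card_action_changes_le [DecidableEq 𝒜] (hA : IsMyopicPlay p S u E X tb A) (i : V)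
    (T : ℕ) :
    ((Finset.range T).filter fun t => A (t + 1) i ≠ A t i).card ≤
      (Set.range fun ω j => X j ω).ncard := by
  have hrefines : ∀ t, A (t + 1) i ≠ A t i →
      numInfoClasses E X A t i < numInfoClasses E X A (t + 1) i := fun t hne =>
    lt_of_not_ge fun hle => hne (hA.action_succ_eq (infoSetoid_succ_eq_of_numInfoClasses_le hle))
  calc _ ≤ ((Finset.range T).filter fun t =>
          numInfoClasses E X A t i < numInfoClasses E X A (t + 1) i).card :=
        Finset.card_le_card (Finset.monotone_filter_right _ fun t _ => hrefines t)
    _ ≤ numInfoClasses E X A T i :=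
        (card_filter_lt_succ_add_le (numInfoClasses_monotone i) T).trans' le_self_add
    _ ≤ _ := hA.numInfoClasses_le T i

theorem exists_stable_le [Fintype V] (hA : IsMyopicPlay p S u E X tb A) :
    ∃ t₀ ≤ (Set.range fun ω j => X j ω).ncard * Fintype.card V,
      ∀ i, infoSetoid E X A (t₀ + 1) i = infoSetoid E X A t₀ i := by
  set Φ : ℕ → ℕ := fun t => ∑ i, numInfoClasses E X A t i
  have hΦ : Monotone Φ := fun t t' htt =>
    Finset.sum_le_sum fun i _ => numInfoClasses_monotone i htt
  have hbound (t : ℕ) : Φ t ≤ (Set.range fun ω j => X j ω).ncard * Fintype.card V :=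
    calc Φ t ≤ ∑ _i : V, (Set.range fun ω j => X j ω).ncard :=
          Finset.sum_le_sum fun i _ => hA.numInfoClasses_le t i
      _ = _ := by rw [Finset.sum_const, Finset.card_univ, smul_eq_mul, mul_comm]
  obtain ⟨t₀, ht₀, hΦt₀⟩ := exists_le_map_succ_eq_of_monotone hΦ (hbound _)
  have hterms := (Finset.sum_eq_sum_iff_of_le fun i _ => numInfoClasses_monotone i t₀.le_succ).mp
    hΦt₀.symm
  exact ⟨t₀, ht₀, fun i =>
    infoSetoid_succ_eq_of_numInfoClasses_le (hterms i (Finset.mem_univ i)).ge⟩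

end IsMyopicPlay

end Myopic

theorem geanakoplos_finite_convergence_general
    (Ω : Type) [Fintype Ω] (p : Ω → ℝ)
    (V : Type) [Fintype V] (E : V → V → Prop)
    (S : Ω → Bool)
    (𝒮 : Type) (X : V → Ω → 𝒮)
    (M : ℕ) (hM : (Set.range fun ω => (fun i => X i ω)).ncard = M)
    (𝒜 : Type) [Fintype 𝒜] [DecidableEq 𝒜]
    (u : Bool → 𝒜 → ℝ)
    (tb : Finset 𝒜 → 𝒜)
    (A : ℕ → V → Ω → 𝒜)
    (hA : ∀ t i ω, A t i ω
      = tb (Finset.univ.filter fun a : 𝒜 =>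
          ∀ b : 𝒜, infoScore p S u E X A t i ω b ≤ infoScore p S u E X A t i ω a)) :
    (∀ (i : V) (t t' : ℕ),
        M * Fintype.card V ≤ t → M * Fintype.card V ≤ t' → A t i = A t' i) ∧
    (∀ (i : V) (T : ℕ),
        ((Finset.range T).filter fun t => A (t + 1) i ≠ A t i).card ≤ M) := by
  have hplay : IsMyopicPlay p S u E X tb A := hA
  obtain ⟨t₀, ht₀, hstable⟩ := hplay.exists_stable_le
  rw [hM] at ht₀
  refine ⟨fun i t t' ht ht' => ?_, fun i T => hM ▸ hplay.card_action_changes_le i T⟩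
  rw [hplay.action_eq_of_le hstable (ht₀.trans ht), hplay.action_eq_of_le hstable (ht₀.trans ht')]

/-- **Geanakoplos: bounds on the number of rounds in finite probability spaces.**
Bayesian agents on a finite directed graph repeatedly choose myopically optimal actions given
their private signal and the past actions of their neighbors, with a fixed deterministic
tie-breaking rule `tb`.  If the joint vector of private signals takes `M` distinct values,
then every agent's action is constant from time `M·|V|` on, and each agent changes its action
at most `M` times. -/
theorem geanakoplos_finite_convergence
    (Ω : Type) [Fintype Ω] (p : Ω → ℝ)
    (hp : ∀ ω, 0 ≤ p ω) (hpsum : ∑ ω, p ω = 1)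
    (V : Type) [Fintype V] (E : V → V → Prop)
    (S : Ω → Bool)
    (𝒮 : Type) (X : V → Ω → 𝒮)
    (M : ℕ) (hM : (Set.range fun ω => (fun i => X i ω)).ncard = M)
    (𝒜 : Type) [Fintype 𝒜] [Nonempty 𝒜] [DecidableEq 𝒜]
    (u : Bool → 𝒜 → ℝ)
    (tb : Finset 𝒜 → 𝒜) (htb : ∀ s : Finset 𝒜, s.Nonempty → tb s ∈ s)
    (A : ℕ → V → Ω → 𝒜)
    (hA : ∀ t i ω, A t i ω
      = tb (Finset.univ.filter fun a : 𝒜 =>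
          ∀ b : 𝒜, infoScore p S u E X A t i ω b ≤ infoScore p S u E X A t i ω a)) :
    (∀ (i : V) (t t' : ℕ),
        M * Fintype.card V ≤ t → M * Fintype.card V ≤ t' → A t i = A t' i) ∧
    (∀ (i : V) (T : ℕ),
        ((Finset.range T).filter fun t => A (t + 1) i ≠ A t i).card ≤ M) :=
  geanakoplos_finite_convergence_general Ω p V E S 𝒮 X M hM 𝒜 u tb A hA
end

section
/- (Mossel–Sly–Tamuz; agreement on actions implies learning) Let S ∈ {0,1} with P(S=1) = 1/2, and let X_1, X_2, … be a countable sequence of random variables that are i.i.d. conditioned on S and have unbounded private beliefs: writing B_0^i = P(S=1 | X_i), for every ε > 0 both P(B_0^i < ε) > 0 and P(B_0^i > 1−ε) > 0. For each i let F_i be a sub-σ-algebra of σ(X_1, X_2, …) with σ(X_i) ⊆ F_i, let B_i = P(S=1 | F_i), and let the action be A_i = 1 if B_i ≥ 1/2 and A_i = 0 otherwise. Suppose all but a vanishing fraction of agents agree on actions: there is a random variable A such that almost surely limsup_n (1/n)·|{i ≤ n : A_i ≠ A}| = 0. Then P(A = S) = 1. -/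
/-!
Fix the state `S = 1` (the other one is symmetric) and call agent `i` a doubter if its belief
`P(S = 1 | Fᵢ)` is at most `1/2`. For `ε > 0` let `Dᵢ` be the event that the private belief of
agent `i` exceeds `1 - ε`; it has the same probability `q` for every `i`, and `q > 0` because
private beliefs are unbounded. Since `Dᵢ` is `Fᵢ`-measurable, integrating the belief over the
doubters in `Dᵢ` gives `P(Dᵢ ∩ doubters) ≤ 2 P(Dᵢ ∩ {S = 0}) ≤ 2εq`. On the other hand, by the
strong law of large numbers conditionally on `S = 1`, a fraction `P(D | S = 1) ≥ (1 - ε) q` of the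
agents lie in `Dᵢ`; where asymptotically all agents are doubters, the same fraction lies in
`Dᵢ ∩ doubters`, so by dominated convergence this event has probability `O(ε)`. Hence almost
surely not almost all agents doubt the true state, and agreement forces `A = S`.
-/

open MeasureTheory ProbabilityTheory Filter Topology

section EmpiricalFreq

variable {Ω : Type*}

noncomputable def empiricalFreq (C : ℕ → Set Ω) (n : ℕ) (ω : Ω) : ℝ :=
  (n : ℝ)⁻¹ * ∑ i ∈ Finset.range n, (C i).indicator 1 ω

variable {C D : ℕ → Set Ω}

lemma empiricalFreq_nonneg (n : ℕ) (ω : Ω) : 0 ≤ empiricalFreq C n ω := by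
  unfold empiricalFreq
  exact mul_nonneg (by positivity) (Finset.sum_nonneg fun i _ => Set.indicator_nonneg (by simp) ω)

lemma empiricalFreq_le_one (n : ℕ) (ω : Ω) : empiricalFreq C n ω ≤ 1 := by
  rcases n.eq_zero_or_pos with rfl | hn
  · simp [empiricalFreq]
  calc empiricalFreq C n ω ≤ (n : ℝ)⁻¹ * ∑ _i ∈ Finset.range n, (1 : ℝ) := by
        unfold empiricalFreq
        gcongr with i
        exact Set.indicator_le_self' (by simp) ω
    _ = 1 := by simp [hn.ne']

lemma empiricalFreq_mono (h : ∀ i, C i ⊆ D i) (n : ℕ) (ω : Ω) :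
    empiricalFreq C n ω ≤ empiricalFreq D n ω := by
  unfold empiricalFreq
  gcongr with i
  · simp
  · exact h i

lemma empiricalFreq_sub_le_sdiff (n : ℕ) (ω : Ω) :
    empiricalFreq D n ω - empiricalFreq C n ω ≤ empiricalFreq (fun i => D i \ C i) n ω := by
  simp only [empiricalFreq, ← mul_sub, ← Finset.sum_sub_distrib]
  gcongr with i
  by_cases hD : ω ∈ D i <;> by_cases hC : ω ∈ C i <;> simp [hD, hC]

lemma empiricalFreq_eq_inv_mul_card {ω : Ω} {p : ℕ → Prop} [DecidablePred p]
    (hC : ∀ i, ω ∈ C i ↔ p i) (n : ℕ) :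
    empiricalFreq C n ω = (n : ℝ)⁻¹ * ((Finset.range n).filter p).card := by
  rw [empiricalFreq, Finset.natCast_card_filter]
  congr 1
  refine Finset.sum_congr rfl fun i _ => ?_
  by_cases hi : p i
  · simp [Set.indicator_of_mem ((hC i).2 hi), hi]
  · simp [Set.indicator_of_notMem (mt (hC i).1 hi), hi]

/-- The agreement hypothesis counts `n + 1` agents but divides by `n`; this does not affect
the limit. -/
lemma tendsto_empiricalFreq_of_limsup_eq_zero {ω : Ω} {p : ℕ → Prop} [DecidablePred p]
    (hC : ∀ i, ω ∈ C i ↔ p i)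
    (h : limsup (fun n : ℕ => (((Finset.range (n + 1)).filter p).card : ℝ) / n) atTop = 0) :
    Tendsto (fun n => empiricalFreq C n ω) atTop (𝓝 0) := by
  set u := fun n : ℕ => (((Finset.range (n + 1)).filter p).card : ℝ) / n
  have hu : ∀ n, u n ≤ 2 := fun n => by
    rcases n.eq_zero_or_pos with rfl | hn
    · simp [u]
    have hcard : (((Finset.range (n + 1)).filter p).card : ℝ) ≤ n + 1 := by
      exact_mod_cast (Finset.card_filter_le _ _).trans (Finset.card_range _).le
    have : (1 : ℝ) ≤ n := by exact_mod_cast hn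
    rw [div_le_iff₀ (by positivity)]
    linarith
  have hle : ∀ n, empiricalFreq C n ω ≤ u n := fun n => by
    rw [empiricalFreq_eq_inv_mul_card hC, inv_mul_eq_div]
    simp only [u]
    gcongr
    exact n.le_succ
  refine tendsto_order.2 ⟨fun a ha => Eventually.of_forall fun n =>
    ha.trans_le (empiricalFreq_nonneg n ω), fun a ha => ?_⟩
  filter_upwards [eventually_lt_of_limsup_lt (h.trans_lt ha) (isBoundedUnder_of ⟨2, hu⟩)]
    with n hn
  exact (hle n).trans_lt hn

variable [MeasurableSpace Ω]

lemma measurable_empiricalFreq (hC : ∀ i, MeasurableSet (C i)) (n : ℕ) :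
    Measurable (empiricalFreq C n) :=
  measurable_const.mul (Finset.measurable_sum _ fun i _ => measurable_one.indicator (hC i))

lemma integral_empiricalFreq {μ : Measure Ω} [IsFiniteMeasure μ] (hC : ∀ i, MeasurableSet (C i))
    (n : ℕ) : ∫ ω, empiricalFreq C n ω ∂μ = (n : ℝ)⁻¹ * ∑ i ∈ Finset.range n, μ.real (C i) := by
  simp only [empiricalFreq, integral_const_mul]
  rw [integral_finsetSum _ fun i _ => (integrable_const 1).indicator (hC i)]
  simp only [integral_indicator_one (hC _)]

lemma mul_measureReal_univ_le_of_ae_tendsto_empiricalFreq {μ : Measure Ω} [IsFiniteMeasure μ]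
    {p δ : ℝ} (hC : ∀ i, MeasurableSet (C i)) (hδ : ∀ i, μ.real (C i) ≤ δ)
    (h : ∀ᵐ ω ∂μ, Tendsto (fun n => empiricalFreq C n ω) atTop (𝓝 p)) :
    p * μ.real Set.univ ≤ δ := by
  have hlim : Tendsto (fun n => ∫ ω, empiricalFreq C n ω ∂μ) atTop (𝓝 (∫ _, p ∂μ)) :=
    tendsto_integral_of_dominated_convergence (fun _ => 1)
      (fun n => (measurable_empiricalFreq hC n).aestronglyMeasurable) (integrable_const 1)
      (fun n => ae_of_all _ fun ω => by
        rw [Real.norm_of_nonneg (empiricalFreq_nonneg n ω)]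
        exact empiricalFreq_le_one n ω) h
  rw [integral_const, smul_eq_mul, mul_comm] at hlim
  refine le_of_tendsto' hlim fun n => ?_
  rw [integral_empiricalFreq hC]
  rcases n.eq_zero_or_pos with rfl | hn
  · simpa using measureReal_nonneg.trans (hδ 0)
  calc (n : ℝ)⁻¹ * ∑ i ∈ Finset.range n, μ.real (C i)
      ≤ (n : ℝ)⁻¹ * ∑ _i ∈ Finset.range n, δ := by gcongr with i; exact hδ i
    _ = δ := by simp [hn.ne']

lemma ae_tendsto_empiricalFreq_preimage {α : Type*} [MeasurableSpace α] {μ : Measure Ω}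
    [IsProbabilityMeasure μ] {X : ℕ → Ω → α} (hX : ∀ i, Measurable (X i))
    (hindep : iIndepFun X μ) (hid : ∀ i, μ.map (X i) = μ.map (X 0)) {T : Set α}
    (hT : MeasurableSet T) :
    ∀ᵐ ω ∂μ, Tendsto (fun n => empiricalFreq (fun i => X i ⁻¹' T) n ω) atTop
      (𝓝 (μ.real (X 0 ⁻¹' T))) := by
  have hφ : Measurable (T.indicator (1 : α → ℝ)) := measurable_one.indicator hT
  have hslln := strong_law_ae (fun i => T.indicator 1 ∘ X i)
    (show Integrable ((X 0 ⁻¹' T).indicator (1 : Ω → ℝ)) μ from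
      (integrable_const 1).indicator ((hX 0) hT))
    (fun i j hij => (hindep.indepFun hij).comp hφ hφ)
    (fun i => IdentDistrib.comp ⟨(hX i).aemeasurable, (hX 0).aemeasurable, hid i⟩ hφ)
  rwa [show μ[T.indicator 1 ∘ X 0] = μ.real (X 0 ⁻¹' T) from
    integral_indicator_one ((hX 0) hT)] at hslln

lemma ae_mem_imp_tendsto_empiricalFreq_preimage {α : Type*} [MeasurableSpace α] {μ : Measure Ω}
    [IsFiniteMeasure μ] {E : Set Ω} (hE0 : μ E ≠ 0) {X : ℕ → Ω → α} (hX : ∀ i, Measurable (X i))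
    (hindep : iIndepFun X (μ[|E])) (hid : ∀ i, (μ[|E]).map (X i) = (μ[|E]).map (X 0))
    {T : Set α} (hT : MeasurableSet T) :
    ∀ᵐ ω ∂μ, ω ∈ E → Tendsto (fun n => empiricalFreq (fun i => X i ⁻¹' T) n ω) atTop
      (𝓝 ((μ[|E]).real (X 0 ⁻¹' T))) := by
  have := cond_isProbabilityMeasure (μ := μ) hE0
  refine ae_imp_of_ae_restrict ?_
  exact (Measure.absolutelyContinuous_smul (ENNReal.inv_ne_zero.2 (measure_ne_top μ E))).ae_le
    (ae_tendsto_empiricalFreq_preimage hX hindep hid hT)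

end EmpiricalFreq

section Belief

variable {Ω : Type*} {m m0 : MeasurableSpace Ω} {P : Measure[m0] Ω} [IsFiniteMeasure P]
  {E s : Set Ω}

lemma condExp_indicator_compl (hm : m ≤ m0) (hE : MeasurableSet E) :
    P[Eᶜ.indicator (1 : Ω → ℝ) | m] =ᵐ[P] 1 - P[E.indicator 1 | m] := by
  have h := condExp_sub (μ := P) (integrable_const (1 : ℝ)) ((integrable_const 1).indicator hE) m
  rw [condExp_const hm] at h
  rw [Set.indicator_compl]
  exact h

lemma setIntegral_condExp_indicator_one (hm : m ≤ m0) (hE : MeasurableSet E)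
    (hs : MeasurableSet[m] s) : ∫ ω in s, P[E.indicator 1 | m] ω ∂P = P.real (s ∩ E) := by
  rw [setIntegral_condExp hm ((integrable_const 1).indicator hE) hs, integral_indicator_one hE,
    measureReal_restrict_apply hE, Set.inter_comm]

lemma measureReal_le_two_mul_sdiff_of_condExp_le_half (hm : m ≤ m0) (hE : MeasurableSet E)
    (hs : MeasurableSet[m] s)
    (h : ∀ᵐ ω ∂P, ω ∈ s → P[E.indicator (1 : Ω → ℝ) | m] ω ≤ 1 / 2) :
    P.real s ≤ 2 * P.real (s \ E) := by
  have hle : ∫ ω in s, P[E.indicator 1 | m] ω ∂P ≤ ∫ _ in s, (1 / 2 : ℝ) ∂P :=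
    setIntegral_mono_on_ae integrable_condExp.integrableOn integrableOn_const (hm s hs) h
  rw [setIntegral_condExp_indicator_one hm hE hs, setIntegral_const, smul_eq_mul] at hle
  linarith [measureReal_inter_add_sdiff (μ := P) (s := s) hE]

lemma measureReal_sdiff_le_of_lt_condExp (hm : m ≤ m0) (hE : MeasurableSet E)
    (hs : MeasurableSet[m] s) {ε : ℝ}
    (h : ∀ᵐ ω ∂P, ω ∈ s → 1 - ε < P[E.indicator (1 : Ω → ℝ) | m] ω) :
    P.real (s \ E) ≤ ε * P.real s := by
  have hle : ∫ _ in s, 1 - ε ∂P ≤ ∫ ω in s, P[E.indicator 1 | m] ω ∂P :=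
    setIntegral_mono_on_ae integrableOn_const integrable_condExp.integrableOn (hm s hs)
      (h.mono fun _ hω hωs => (hω hωs).le)
  rw [setIntegral_condExp_indicator_one hm hE hs, setIntegral_const, smul_eq_mul] at hle
  linarith [measureReal_inter_add_sdiff (μ := P) (s := s) hE]

lemma measure_one_sub_lt_condExp_indicator_compl (hm : m ≤ m0) (hE : MeasurableSet E) (ε : ℝ) :
    P {ω | 1 - ε < P[Eᶜ.indicator (1 : Ω → ℝ) | m] ω} =
      P {ω | P[E.indicator (1 : Ω → ℝ) | m] ω < ε} := by
  refine measure_congr <| (condExp_indicator_compl hm hE).mono fun ω hω => ?_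
  change (1 - ε < _) = (_ < ε)
  rw [hω, Pi.sub_apply, Pi.one_apply, sub_lt_sub_iff_left]

end Belief

section PrivateBelief

variable {Ω α : Type*} [MeasurableSpace Ω] [mα : MeasurableSpace α] {P : Measure Ω}
  {E : Set Ω} {X Y : Ω → α}

/-- `P(E | X = a)`, as the density of the law of `X` on `E` with respect to the law of `X`. -/
noncomputable def privateBelief (P : Measure Ω) (E : Set Ω) (X : Ω → α) (a : α) : ℝ :=
  (((P.restrict E).map X).rnDeriv (P.map X) a).toReal

lemma measurable_privateBelief : Measurable (privateBelief P E X) :=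
  (Measure.measurable_rnDeriv _ _).ennreal_toReal

variable [IsFiniteMeasure P]

lemma condExp_indicator_comap_ae_eq_privateBelief (hX : Measurable X) (hE : MeasurableSet E) :
    P[E.indicator 1 | mα.comap X] =ᵐ[P] privateBelief P E X ∘ X := by
  refine (condExp_congr_ae ?_).trans
    (toReal_rnDeriv_map Measure.restrict_le_self.absolutelyContinuous hX).symm
  filter_upwards [Measure.rnDeriv_restrict_self P hE] with ω hω
  rw [hω]
  by_cases hωE : ω ∈ E <;> simp [hωE]

lemma map_restrict_eq_of_map_cond_eq (h : (P[|E]).map X = (P[|E]).map Y) :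
    (P.restrict E).map X = (P.restrict E).map Y := by
  by_cases hE0 : P E = 0
  · simp [Measure.restrict_eq_zero.mpr hE0]
  have hcond : ∀ Z : Ω → α, (P.restrict E).map Z = P E • (P[|E]).map Z := fun Z => by
    rw [ProbabilityTheory.cond, Measure.map_smul, smul_smul,
      ENNReal.mul_inv_cancel hE0 (measure_ne_top P E), one_smul]
  rw [hcond, hcond, h]

lemma map_eq_of_map_cond_eq (hE : MeasurableSet E) (hX : Measurable X) (hY : Measurable Y)
    (h : (P[|E]).map X = (P[|E]).map Y) (hc : (P[|Eᶜ]).map X = (P[|Eᶜ]).map Y) :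
    P.map X = P.map Y := by
  rw [← Measure.restrict_add_restrict_compl (μ := P) hE, Measure.map_add _ _ hX,
    Measure.map_add _ _ hY, map_restrict_eq_of_map_cond_eq h, map_restrict_eq_of_map_cond_eq hc]

lemma privateBelief_eq_of_map_cond_eq (hE : MeasurableSet E) (hX : Measurable X)
    (hY : Measurable Y) (h : (P[|E]).map X = (P[|E]).map Y)
    (hc : (P[|Eᶜ]).map X = (P[|Eᶜ]).map Y) :
    privateBelief P E X = privateBelief P E Y := by
  unfold privateBelief
  rw [map_restrict_eq_of_map_cond_eq h, map_eq_of_map_cond_eq hE hX hY h hc]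

end PrivateBelief

section StrongSignal

variable {Ω α : Type*} [m0 : MeasurableSpace Ω] [mα : MeasurableSpace α] {P : Measure Ω}
  {X : ℕ → Ω → α} {E : Set Ω} {ε : ℝ}

/-- The belief function of `X 0` serves as a common version of every agent's private belief
(see `privateBelief_eq_of_map_cond_eq`). -/
def strongSignal (P : Measure Ω) (E : Set Ω) (X : ℕ → Ω → α) (ε : ℝ) (i : ℕ) : Set Ω :=
  X i ⁻¹' {a | 1 - ε < privateBelief P E (X 0) a}

lemma measurableSet_strongSignal (i : ℕ) :
    MeasurableSet[mα.comap (X i)] (strongSignal P E X ε i) :=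
  ⟨_, measurableSet_lt measurable_const measurable_privateBelief, rfl⟩

variable [IsFiniteMeasure P]

lemma measureReal_strongSignal_eq (hX : ∀ i, Measurable (X i)) (hE : MeasurableSet E)
    (hidE : ∀ i, (P[|E]).map (X i) = (P[|E]).map (X 0))
    (hidEc : ∀ i, (P[|Eᶜ]).map (X i) = (P[|Eᶜ]).map (X 0)) (i : ℕ) :
    P.real (strongSignal P E X ε i) = P.real (strongSignal P E X ε 0) := by
  have hT : MeasurableSet {a | 1 - ε < privateBelief P E (X 0) a} :=
    measurableSet_lt measurable_const measurable_privateBelief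
  rw [strongSignal, strongSignal, measureReal_def, measureReal_def, ← Measure.map_apply (hX i) hT,
    ← Measure.map_apply (hX 0) hT, map_eq_of_map_cond_eq hE (hX i) (hX 0) (hidE i) (hidEc i)]

lemma measureReal_strongSignal_sdiff_le_mul (hX : ∀ i, Measurable (X i)) (hE : MeasurableSet E)
    (hidE : ∀ i, (P[|E]).map (X i) = (P[|E]).map (X 0))
    (hidEc : ∀ i, (P[|Eᶜ]).map (X i) = (P[|Eᶜ]).map (X 0)) (i : ℕ) :
    P.real (strongSignal P E X ε i \ E) ≤ ε * P.real (strongSignal P E X ε i) := by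
  refine measureReal_sdiff_le_of_lt_condExp (hX i).comap_le hE (measurableSet_strongSignal i) ?_
  have hbelief := condExp_indicator_comap_ae_eq_privateBelief (P := P) (hX i) hE
  rw [privateBelief_eq_of_map_cond_eq hE (hX i) (hX 0) (hidE i) (hidEc i)] at hbelief
  filter_upwards [hbelief] with ω hω hωD
  rw [hω]
  exact hωD

lemma measureReal_strongSignal_pos (hX : ∀ i, Measurable (X i)) (hE : MeasurableSet E)
    (hpos : 0 < P {ω | 1 - ε < P[E.indicator (1 : Ω → ℝ) | mα.comap (X 0)] ω}) :
    0 < P.real (strongSignal P E X ε 0) := by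
  refine ENNReal.toReal_pos ?_ (measure_ne_top _ _)
  rw [← (measure_congr _ : P {ω | 1 - ε < P[E.indicator (1 : Ω → ℝ) | mα.comap (X 0)] ω} = _)]
  · exact hpos.ne'
  filter_upwards [condExp_indicator_comap_ae_eq_privateBelief (P := P) (hX 0) hE] with ω hω
  exact congrArg (1 - ε < ·) hω

variable {F : ℕ → MeasurableSpace Ω} {G : ℕ → Set Ω}

lemma measureReal_strongSignal_sdiff_le_two_mul (hX : ∀ i, Measurable (X i))
    (hE : MeasurableSet E) (hidE : ∀ i, (P[|E]).map (X i) = (P[|E]).map (X 0))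
    (hidEc : ∀ i, (P[|Eᶜ]).map (X i) = (P[|Eᶜ]).map (X 0))
    (hFle : ∀ i, F i ≤ m0) (hXF : ∀ i, mα.comap (X i) ≤ F i)
    (hG : ∀ i, MeasurableSet[F i] (G i))
    (hGc : ∀ i, ∀ᵐ ω ∂P, ω ∉ G i → P[E.indicator (1 : Ω → ℝ) | F i] ω ≤ 1 / 2) (i : ℕ) :
    P.real (strongSignal P E X ε i \ G i) ≤ 2 * ε * P.real (strongSignal P E X ε 0) := by
  calc P.real (strongSignal P E X ε i \ G i)
      ≤ 2 * P.real ((strongSignal P E X ε i \ G i) \ E) :=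
        measureReal_le_two_mul_sdiff_of_condExp_le_half (hFle i) hE
          ((hXF i _ (measurableSet_strongSignal i)).diff (hG i))
          ((hGc i).mono fun ω h hω => h hω.2)
    _ ≤ 2 * P.real (strongSignal P E X ε i \ E) := by
        gcongr 2 * ?_
        exact measureReal_mono (Set.sdiff_subset_sdiff_left Set.sdiff_subset)
    _ ≤ 2 * ε * P.real (strongSignal P E X ε 0) := by
        rw [mul_assoc, ← measureReal_strongSignal_eq hX hE hidE hidEc i]
        gcongr
        exact measureReal_strongSignal_sdiff_le_mul hX hE hidE hidEc i

end StrongSignal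

section Learning

variable {Ω α : Type*} [m0 : MeasurableSpace Ω] [mα : MeasurableSpace α] {P : Measure Ω}
  [IsProbabilityMeasure P] {X : ℕ → Ω → α} {E : Set Ω} {ε : ℝ} {F : ℕ → MeasurableSpace Ω}
  {G : ℕ → Set Ω}

lemma measureReal_inter_le_measureReal_cond (hE : MeasurableSet E) (s : Set Ω) :
    P.real (s ∩ E) ≤ (P[|E]).real s := by
  have hle : P (s ∩ E) ≤ P[s|E] := by
    rw [cond_apply hE, Set.inter_comm]
    exact le_mul_of_one_le_left zero_le (ENNReal.one_le_inv.2 prob_le_one)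
  exact ENNReal.toReal_mono (measure_ne_top _ _) hle

lemma one_sub_mul_measureReal_le_two_mul (hX : ∀ i, Measurable (X i)) (hE : MeasurableSet E)
    (hindep : iIndepFun X (P[|E])) (hidE : ∀ i, (P[|E]).map (X i) = (P[|E]).map (X 0))
    (hidEc : ∀ i, (P[|Eᶜ]).map (X i) = (P[|Eᶜ]).map (X 0))
    (hpos : 0 < P {ω | 1 - ε < P[E.indicator (1 : Ω → ℝ) | mα.comap (X 0)] ω})
    (hFle : ∀ i, F i ≤ m0) (hXF : ∀ i, mα.comap (X i) ≤ F i)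
    (hG : ∀ i, MeasurableSet[F i] (G i))
    (hGc : ∀ i, ∀ᵐ ω ∂P, ω ∉ G i → P[E.indicator (1 : Ω → ℝ) | F i] ω ≤ 1 / 2)
    (hε : ε < 1) {W : Set Ω} (hW : MeasurableSet W) (hWE : W ⊆ E)
    (hWfreq : ∀ ω ∈ W, Tendsto (fun n => empiricalFreq G n ω) atTop (𝓝 0)) :
    (1 - ε) * P.real W ≤ 2 * ε := by
  set D := strongSignal P E X ε
  have hq : 0 < P.real (D 0) := measureReal_strongSignal_pos hX hE hpos
  have hr : (1 - ε) * P.real (D 0) ≤ P.real (D 0 ∩ E) := by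
    linarith [measureReal_strongSignal_sdiff_le_mul hX hE hidE hidEc 0 (ε := ε),
      measureReal_inter_add_sdiff (μ := P) (s := D 0) hE]
  have hE0 : P E ≠ 0 := fun h => by
    have : P.real (D 0 ∩ E) = 0 :=
      (measureReal_eq_zero_iff).2 (measure_mono_null Set.inter_subset_right h)
    nlinarith
  set p := (P[|E]).real (D 0)
  have hfreq : ∀ᵐ ω ∂P.restrict W,
      Tendsto (fun n => empiricalFreq (fun i => D i \ G i) n ω) atTop (𝓝 p) := by
    rw [ae_restrict_iff' hW]
    filter_upwards [ae_mem_imp_tendsto_empiricalFreq_preimage hE0 hX hindep hidE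
      (T := {a | 1 - ε < privateBelief P E (X 0) a})
      (measurableSet_lt measurable_const measurable_privateBelief)] with ω hD hωW
    have hD : Tendsto (fun n => empiricalFreq D n ω) atTop (𝓝 p) := hD (hWE hωW)
    exact tendsto_of_tendsto_of_tendsto_of_le_of_le (by simpa using hD.sub (hWfreq ω hωW)) hD
      (empiricalFreq_sub_le_sdiff · ω) (empiricalFreq_mono (fun _ => Set.sdiff_subset) · ω)
  have hbound := mul_measureReal_univ_le_of_ae_tendsto_empiricalFreq
    (fun i => hFle i _ ((hXF i _ (measurableSet_strongSignal i)).diff (hG i)))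
    (fun i => (ENNReal.toReal_mono (measure_ne_top _ _) (Measure.restrict_apply_le _ _)).trans
      (measureReal_strongSignal_sdiff_le_two_mul hX hE hidE hidEc hFle hXF hG hGc i)) hfreq
  rw [measureReal_restrict_apply_univ] at hbound
  have hp := hr.trans (measureReal_inter_le_measureReal_cond hE (D 0))
  have : P.real (D 0) * ((1 - ε) * P.real W) ≤ P.real (D 0) * (2 * ε) := by
    nlinarith [mul_le_mul_of_nonneg_right hp (measureReal_nonneg (μ := P) (s := W))]
  exact le_of_mul_le_mul_left this hq

theorem ae_not_tendsto_empiricalFreq_zero (hX : ∀ i, Measurable (X i)) (hE : MeasurableSet E)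
    (hindep : iIndepFun X (P[|E])) (hidE : ∀ i, (P[|E]).map (X i) = (P[|E]).map (X 0))
    (hidEc : ∀ i, (P[|Eᶜ]).map (X i) = (P[|Eᶜ]).map (X 0))
    (hpos : ∀ ε, 0 < ε → 0 < P {ω | 1 - ε < P[E.indicator (1 : Ω → ℝ) | mα.comap (X 0)] ω})
    (hFle : ∀ i, F i ≤ m0) (hXF : ∀ i, mα.comap (X i) ≤ F i)
    (hG : ∀ i, MeasurableSet[F i] (G i))
    (hGc : ∀ i, ∀ᵐ ω ∂P, ω ∉ G i → P[E.indicator (1 : Ω → ℝ) | F i] ω ≤ 1 / 2) :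
    ∀ᵐ ω ∂P, ω ∈ E → ¬Tendsto (fun n => empiricalFreq G n ω) atTop (𝓝 0) := by
  set W := E ∩ {ω | Tendsto (fun n => empiricalFreq G n ω) atTop (𝓝 0)}
  have hW : MeasurableSet W := hE.inter <| measurableSet_tendsto _
    (measurable_empiricalFreq fun i => hFle i _ (hG i))
  have hbound : ∀ ε, 0 < ε → ε < 1 → (1 - ε) * P.real W ≤ 2 * ε := fun ε hε hε1 =>
    one_sub_mul_measureReal_le_two_mul hX hE hindep hidE hidEc (hpos ε hε) hFle hXF hG hGc hε1 hW
      Set.inter_subset_left fun _ hω => hω.2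
  have hW0 : P.real W = 0 := by
    by_contra hne
    have hw : 0 < P.real W := measureReal_nonneg.lt_of_ne' hne
    have hw1 : P.real W ≤ 1 := measureReal_le_one
    nlinarith [hbound (P.real W / 4) (by positivity) (by linarith)]
  filter_upwards [measure_eq_zero_iff_ae_notMem.1 ((measureReal_eq_zero_iff).1 hW0)]
    with ω hω hωE hlim
  exact hω ⟨hωE, hlim⟩

theorem ae_not_tendsto_empiricalFreq_zero_of_notMem (hX : ∀ i, Measurable (X i))
    (hE : MeasurableSet E) (hindep : iIndepFun X (P[|Eᶜ]))
    (hidE : ∀ i, (P[|E]).map (X i) = (P[|E]).map (X 0))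
    (hidEc : ∀ i, (P[|Eᶜ]).map (X i) = (P[|Eᶜ]).map (X 0))
    (hneg : ∀ ε, 0 < ε → 0 < P {ω | P[E.indicator (1 : Ω → ℝ) | mα.comap (X 0)] ω < ε})
    (hFle : ∀ i, F i ≤ m0) (hXF : ∀ i, mα.comap (X i) ≤ F i)
    (hG : ∀ i, MeasurableSet[F i] (G i))
    (hGc : ∀ i, ∀ᵐ ω ∂P, ω ∉ G i → 1 / 2 ≤ P[E.indicator (1 : Ω → ℝ) | F i] ω) :
    ∀ᵐ ω ∂P, ω ∉ E → ¬Tendsto (fun n => empiricalFreq G n ω) atTop (𝓝 0) :=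
  ae_not_tendsto_empiricalFreq_zero (E := Eᶜ) hX hE.compl hindep hidEc (by rwa [compl_compl])
    (fun ε hε =>
      measure_one_sub_lt_condExp_indicator_compl (P := P) (hX 0).comap_le hE ε ▸ hneg ε hε)
    hFle hXF hG fun i => by
      filter_upwards [condExp_indicator_compl (hFle i) hE, hGc i] with ω hω hωG hωG'
      rw [hω, Pi.sub_apply, Pi.one_apply]
      linarith [hωG hωG']

end Learning

theorem agreement_on_actions_implies_learning_general
    {Ω : Type*} [m0 : MeasurableSpace Ω] (P : Measure Ω) [IsProbabilityMeasure P]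
    {E : Type*} [mE : MeasurableSpace E]
    (S : Ω → Bool) (hS : Measurable S)
    (X : ℕ → Ω → E) (hX : ∀ i, Measurable (X i))
    -- conditioned on `S`, the signals are independent …
    (hcondind : ∀ s : Bool, iIndepFun X (P[|{ω | S ω = s}]))
    -- … and identically distributed
    (hcondid : ∀ (s : Bool) (i : ℕ),
      (P[|{ω | S ω = s}]).map (X i) = (P[|{ω | S ω = s}]).map (X 0))
    -- unbounded private beliefs: `B₀ⁱ = P(S=1 | Xᵢ)` gets arbitrarily close to `0` and `1`
    (hunbounded : ∀ (i : ℕ) (ε : ℝ), 0 < ε →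
      0 < P {ω | (P[(fun ω' => if S ω' = true then (1 : ℝ) else 0) |
            MeasurableSpace.comap (X i) mE]) ω < ε} ∧
      0 < P {ω | 1 - ε < (P[(fun ω' => if S ω' = true then (1 : ℝ) else 0) |
            MeasurableSpace.comap (X i) mE]) ω})
    (F : ℕ → MeasurableSpace Ω)
    (hFle : ∀ i, F i ≤ m0)
    (hXF : ∀ i, MeasurableSpace.comap (X i) mE ≤ F i)
    (A : ℕ → Ω → Bool)
    (hA : ∀ i ω, A i ω =
      if 1 / 2 ≤ (P[(fun ω' => if S ω' = true then (1 : ℝ) else 0) | F i]) ω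
      then true else false)
    (Alim : Ω → Bool)
    (hagree : ∀ᵐ ω ∂P,
      limsup (fun n : ℕ =>
          (((Finset.range (n + 1)).filter (fun i => A i ω ≠ Alim ω)).card : ℝ) / n)
        atTop = 0) :
    P {ω | Alim ω = S ω} = 1 := by
  classical
  set St : Set Ω := {ω | S ω = true}
  have hSt : MeasurableSet St := hS (measurableSet_singleton true)
  have hStc : Stᶜ = {ω | S ω = false} := by ext ω; simp [St]
  have hind : (fun ω => if S ω = true then (1 : ℝ) else 0) = St.indicator 1 := by
    ext ω; simp [St, Set.indicator_apply]
  simp only [hind] at hunbounded hA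
  have hAt : ∀ i, {ω | A i ω = true} = {ω | 1 / 2 ≤ P[St.indicator (1 : Ω → ℝ) | F i] ω} :=
    fun i => by ext ω; simp [hA]
  have hmeas : ∀ i, MeasurableSet[F i] {ω | A i ω = true} := fun i =>
    hAt i ▸ measurableSet_le measurable_const stronglyMeasurable_condExp.measurable
  have htrue := ae_not_tendsto_empiricalFreq_zero (G := fun i => {ω | A i ω = true}) hX hSt
    (hcondind true) (hcondid true) (hStc ▸ hcondid false) (fun ε hε => (hunbounded 0 ε hε).2)
    hFle hXF hmeas fun i => ae_of_all _ fun ω hω => by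
      rw [hAt] at hω
      exact (not_le.1 hω).le
  have hfalse := ae_not_tendsto_empiricalFreq_zero_of_notMem
    (G := fun i => {ω | A i ω = true}ᶜ) hX hSt (hStc ▸ hcondind false) (hcondid true)
    (hStc ▸ hcondid false) (fun ε hε => (hunbounded 0 ε hε).1) hFle hXF (fun i => (hmeas i).compl)
    fun i => ae_of_all _ fun ω hω => by
      rwa [Set.notMem_compl_iff, hAt] at hω
  refine (measure_congr (ae_eq_univ.2 (ae_iff.1 ?_))).trans measure_univ
  filter_upwards [htrue, hfalse, hagree] with ω ht hf hω
  by_contra hne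
  cases hSω : S ω
  · have hAlim : Alim ω = true := by simpa [hSω] using hne
    exact hf (by simpa [St] using hSω)
      (tendsto_empiricalFreq_of_limsup_eq_zero (fun i => by simp [hAlim]) hω)
  · have hAlim : Alim ω = false := by simpa [hSω] using hne
    exact ht hSω (tendsto_empiricalFreq_of_limsup_eq_zero (fun i => by simp [hAlim]) hω)

/-- **Mossel–Sly–Tamuz: agreement on actions implies learning (unbounded beliefs).**
Let `S ∈ {0,1}` with `P(S=1) = 1/2`, and let `X₁, X₂, …` be countably many signals that are
i.i.d. conditioned on `S` and have unbounded private beliefs.  Let `Fᵢ ⊇ σ(Xᵢ)` be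
sub-σ-algebras of `σ(X₁, X₂, …)`, let `Bᵢ = P(S=1 | Fᵢ)` and let `Aᵢ = 1` iff `Bᵢ ≥ 1/2`.
If there is a random variable `A` such that almost surely the fraction of the first `n` agents
with `Aᵢ ≠ A` tends to `0` (its `limsup` is `0`), then `P(A = S) = 1`. -/
theorem agreement_on_actions_implies_learning
    {Ω : Type*} [m0 : MeasurableSpace Ω] (P : Measure Ω) [IsProbabilityMeasure P]
    {E : Type*} [mE : MeasurableSpace E] [StandardBorelSpace E]
    (S : Ω → Bool) (hS : Measurable S) (hShalf : P {ω | S ω = true} = 1 / 2)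
    (X : ℕ → Ω → E) (hX : ∀ i, Measurable (X i))
    -- conditioned on `S`, the signals are independent …
    (hcondind : ∀ s : Bool, iIndepFun X (P[|{ω | S ω = s}]))
    -- … and identically distributed
    (hcondid : ∀ (s : Bool) (i : ℕ),
      (P[|{ω | S ω = s}]).map (X i) = (P[|{ω | S ω = s}]).map (X 0))
    -- unbounded private beliefs: `B₀ⁱ = P(S=1 | Xᵢ)` gets arbitrarily close to `0` and `1`
    (hunbounded : ∀ (i : ℕ) (ε : ℝ), 0 < ε →
      0 < P {ω | (P[(fun ω' => if S ω' = true then (1 : ℝ) else 0) |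
            MeasurableSpace.comap (X i) mE]) ω < ε} ∧
      0 < P {ω | 1 - ε < (P[(fun ω' => if S ω' = true then (1 : ℝ) else 0) |
            MeasurableSpace.comap (X i) mE]) ω})
    (F : ℕ → MeasurableSpace Ω)
    (hFle : ∀ i, F i ≤ m0)
    (hXF : ∀ i, MeasurableSpace.comap (X i) mE ≤ F i)
    (hFX : ∀ i, F i ≤ MeasurableSpace.comap (fun ω (i : ℕ) => X i ω) MeasurableSpace.pi)
    (A : ℕ → Ω → Bool)
    (hA : ∀ i ω, A i ω =
      if 1 / 2 ≤ (P[(fun ω' => if S ω' = true then (1 : ℝ) else 0) | F i]) ω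
      then true else false)
    (Alim : Ω → Bool)
    (hagree : ∀ᵐ ω ∂P,
      limsup (fun n : ℕ =>
          (((Finset.range (n + 1)).filter (fun i => A i ω ≠ Alim ω)).card : ℝ) / n)
        atTop = 0) :
    P {ω | Alim ω = S ω} = 1 :=
  agreement_on_actions_implies_learning_general (m0 := m0) P (mE := mE) S hS X hX hcondind hcondid
    hunbounded F hFle hXF A hA Alim hagree
end
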